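/- arXiv:1804.00801 — 8 statements merged into one kernel-verified Lean document; each statement's English description precedes it below -/
import Mathlib

section
/- Let S ⊆ ℝ^m be a nonempty closed convex set and let Π_S denote the Euclidean (metric) projection onto S. Then for all x, y, z ∈ ℝ^m one has 2⟨Π_S(z+x) − Π_S(z+y), x⟩ ≤ ‖x − y‖² + ‖Π_S(z+x) − z‖² − ‖Π_S(z+y) − z‖². -/
open RealInnerProductSpace

/-- Proposition 2.4: for the Euclidean projection `proj` onto a nonempty closed convex
set `S ⊆ ℝ^m`, for all `x, y, z`,
`2⟨Π_S(z+x) − Π_S(z+y), x⟩ ≤ ‖x − y‖² + ‖Π_S(z+x) − z‖² − ‖Π_S(z+y) − z‖²`. -/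
theorem projection_three_point_inequality {m : ℕ}
    (S : Set (EuclideanSpace ℝ (Fin m)))
    (hS_ne : S.Nonempty) (hS_closed : IsClosed S) (hS_convex : Convex ℝ S)
    (proj : EuclideanSpace ℝ (Fin m) → EuclideanSpace ℝ (Fin m))
    (hproj_mem : ∀ x, proj x ∈ S)
    (hproj_char : ∀ x, ∀ y ∈ S, ⟪y - proj x, x - proj x⟫ ≤ 0)
    (x y z : EuclideanSpace ℝ (Fin m)) :
    2 * ⟪proj (z + x) - proj (z + y), x⟫ ≤
      ‖x - y‖ ^ 2 + ‖proj (z + x) - z‖ ^ 2 - ‖proj (z + y) - z‖ ^ 2 := by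
  set a := proj (z + x) with ha
  set b := proj (z + y) with hb
  have h1 : ⟪a - b, z + y - b⟫ ≤ 0 := hproj_char (z + y) a (hproj_mem (z + x))
  have h2 : (0:ℝ) ≤ ‖(x - y) - (a - b)‖ ^ 2 := sq_nonneg _
  have e1 : ‖(x - y) - (a - b)‖ ^ 2 = ⟪(x - y) - (a - b), (x - y) - (a - b)⟫ :=
    (real_inner_self_eq_norm_sq _).symm
  have e2 : ‖x - y‖ ^ 2 = ⟪x - y, x - y⟫ := (real_inner_self_eq_norm_sq _).symm
  have e3 : ‖a - z‖ ^ 2 = ⟪a - z, a - z⟫ := (real_inner_self_eq_norm_sq _).symm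
  have e4 : ‖b - z‖ ^ 2 = ⟪b - z, b - z⟫ := (real_inner_self_eq_norm_sq _).symm
  rw [e1] at h2
  rw [e2, e3, e4]
  simp only [inner_sub_left, inner_sub_right, inner_add_left, inner_add_right] at *
  have c1 := real_inner_comm a b
  have c2 := real_inner_comm a x
  have c3 := real_inner_comm a y
  have c4 := real_inner_comm a z
  have c5 := real_inner_comm b x
  have c6 := real_inner_comm b y
  have c7 := real_inner_comm b z
  have c8 := real_inner_comm x y
  have c9 := real_inner_comm x z
  have c10 := real_inner_comm y z
  linarith
end

section
/- For every fixed p ∈ ℝ^m the function θ ↦ φ(θ, p) is convex on ℝ^m, and for every fixed θ ∈ ℝ^m the function p ↦ φ(θ, p) is concave on ℝ^m. -/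
open RealInnerProductSpace

/-- Theorem 2.3(i): with `φ(θ, p) = (‖Π(p + γθ)‖² − ‖p‖²)/(2γ)`, where `Π` is the
Euclidean projection onto the dual cone `C*`, the function `θ ↦ φ(θ,p)` is convex
and `p ↦ φ(θ,p)` is concave on `ℝ^m`. -/
theorem phi_convex_concave {m : ℕ}
    (C : Set (EuclideanSpace ℝ (Fin m)))
    (hC_ne : C.Nonempty) (hC_closed : IsClosed C) (hC_convex : Convex ℝ C)
    (hC_cone : ∀ a b : ℝ, 0 ≤ a → 0 ≤ b → ∀ x ∈ C, ∀ y ∈ C, a • x + b • y ∈ C)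
    (Cstar : Set (EuclideanSpace ℝ (Fin m)))
    (hCstar : Cstar = {p : EuclideanSpace ℝ (Fin m) | ∀ x ∈ C, 0 ≤ ⟪p, x⟫})
    (proj : EuclideanSpace ℝ (Fin m) → EuclideanSpace ℝ (Fin m))
    (hproj_mem : ∀ x, proj x ∈ Cstar)
    (hproj_char : ∀ x, ∀ q ∈ Cstar, ⟪q - proj x, x - proj x⟫ ≤ 0)
    (γ : ℝ) (hγ : 0 < γ)
    (φ : EuclideanSpace ℝ (Fin m) → EuclideanSpace ℝ (Fin m) → ℝ)
    (hφ : ∀ θ p, φ θ p = (‖proj (p + γ • θ)‖ ^ 2 - ‖p‖ ^ 2) / (2 * γ)) :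
    (∀ p, ConvexOn ℝ Set.univ (fun θ => φ θ p)) ∧
      (∀ θ, ConcaveOn ℝ Set.univ (fun p => φ θ p)) := by
  have h2γ : (0:ℝ) < 2 * γ := by linarith
  -- 0 ∈ Cstar
  have hzero : (0 : EuclideanSpace ℝ (Fin m)) ∈ Cstar := by
    rw [hCstar]; intro x hx; simp
  -- 2 • proj x ∈ Cstar
  have hsmul2 : ∀ x, (2:ℝ) • proj x ∈ Cstar := by
    intro x
    have hm := hproj_mem x
    rw [hCstar] at hm ⊢
    intro y hy
    have h := hm y hy
    rw [real_inner_smul_left]; linarith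
  -- orthogonality : ⟪proj x, x - proj x⟫ = 0
  have horth : ∀ x, ⟪proj x, x - proj x⟫ = 0 := by
    intro x
    have h1 := hproj_char x 0 hzero
    have h2 := hproj_char x ((2:ℝ) • proj x) (hsmul2 x)
    have e1 : ((0:EuclideanSpace ℝ (Fin m)) - proj x) = -(proj x) := by simp
    rw [e1, inner_neg_left] at h1
    have e2 : ((2:ℝ) • proj x - proj x) = proj x := by
      rw [two_smul]; abel
    rw [e2] at h2
    linarith
  have hinner : ∀ x, ⟪proj x, x⟫ = ‖proj x‖ ^ 2 := by
    intro x
    have := horth x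
    rw [inner_sub_right, real_inner_self_eq_norm_sq] at this
    linarith
  -- minimality : ‖x - proj x‖² ≤ ‖x - q‖² for q ∈ Cstar
  have hmin : ∀ x, ∀ q ∈ Cstar, ‖x - proj x‖ ^ 2 ≤ ‖x - q‖ ^ 2 := by
    intro x q hq
    have key := hproj_char x q hq
    have hexp : ‖x - q‖ ^ 2
        = ‖x - proj x‖ ^ 2 - 2 * ⟪x - proj x, q - proj x⟫ + ‖q - proj x‖ ^ 2 := by
      have e : x - q = (x - proj x) - (q - proj x) := by abel
      rw [e, norm_sub_sq_real]
    have hcomm : ⟪x - proj x, q - proj x⟫ = ⟪q - proj x, x - proj x⟫ :=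
      real_inner_comm _ _
    nlinarith [sq_nonneg ‖q - proj x‖]
  -- upper bound : 2⟪q,x⟫ - ‖q‖² ≤ ‖proj x‖² for q ∈ Cstar
  have hub : ∀ x, ∀ q ∈ Cstar, 2 * ⟪q, x⟫ - ‖q‖ ^ 2 ≤ ‖proj x‖ ^ 2 := by
    intro x q hq
    have h := hmin x q hq
    rw [norm_sub_sq_real, norm_sub_sq_real] at h
    have h1 := hinner x
    have hc1 : ⟪x, proj x⟫ = ⟪proj x, x⟫ := real_inner_comm _ _
    have hc2 : ⟪x, q⟫ = ⟪q, x⟫ := real_inner_comm _ _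
    nlinarith
  -- convexity of g(x) = ‖proj x‖²
  have hgconv : ∀ x y : EuclideanSpace ℝ (Fin m), ∀ a b : ℝ, 0 ≤ a → 0 ≤ b → a + b = 1 →
      ‖proj (a • x + b • y)‖ ^ 2 ≤ a * ‖proj x‖ ^ 2 + b * ‖proj y‖ ^ 2 := by
    intro x y a b ha hb hab
    set z := a • x + b • y with hz
    set q := proj z with hqdef
    have hq : q ∈ Cstar := hproj_mem z
    have h1 := hub x q hq
    have h2 := hub y q hq
    have hiz : ⟪q, z⟫ = a * ⟪q, x⟫ + b * ⟪q, y⟫ := by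
      rw [hz, inner_add_right, real_inner_smul_right, real_inner_smul_right]
    have hgz : ⟪q, z⟫ = ‖q‖ ^ 2 := hinner z
    have ha1 : a * (2 * ⟪q, x⟫ - ‖q‖ ^ 2) ≤ a * ‖proj x‖ ^ 2 :=
      mul_le_mul_of_nonneg_left h1 ha
    have hb1 : b * (2 * ⟪q, y⟫ - ‖q‖ ^ 2) ≤ b * ‖proj y‖ ^ 2 :=
      mul_le_mul_of_nonneg_left h2 hb
    nlinarith
  -- convexity of d²(x) = ‖x - proj x‖²
  have hdconv : ∀ x y : EuclideanSpace ℝ (Fin m), ∀ a b : ℝ, 0 ≤ a → 0 ≤ b → a + b = 1 →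
      ‖(a • x + b • y) - proj (a • x + b • y)‖ ^ 2
        ≤ a * ‖x - proj x‖ ^ 2 + b * ‖y - proj y‖ ^ 2 := by
    intro x y a b ha hb hab
    set z := a • x + b • y with hz
    have hq : a • proj x + b • proj y ∈ Cstar := by
      have hmx := hproj_mem x
      have hmy := hproj_mem y
      rw [hCstar] at hmx hmy ⊢
      intro w hw
      rw [inner_add_left, real_inner_smul_left, real_inner_smul_left]
      have := hmx w hw
      have := hmy w hw
      positivity
    have h1 := hmin z _ hq
    have he : z - (a • proj x + b • proj y) = a • (x - proj x) + b • (y - proj y) := by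
      rw [hz]; module
    rw [he] at h1
    have hnorm : ‖a • (x - proj x) + b • (y - proj y)‖ ^ 2
        ≤ a * ‖x - proj x‖ ^ 2 + b * ‖y - proj y‖ ^ 2 := by
      set u := x - proj x
      set v := y - proj y
      have hexp : ‖a • u + b • v‖ ^ 2
          = a ^ 2 * ‖u‖ ^ 2 + 2 * (a * b * ⟪u, v⟫) + b ^ 2 * ‖v‖ ^ 2 := by
        rw [norm_add_sq_real, norm_smul, norm_smul, real_inner_smul_left,
          real_inner_smul_right]
        simp [abs_of_nonneg ha, abs_of_nonneg hb]
        ring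
      have huv : (0:ℝ) ≤ ‖u‖ ^ 2 - 2 * ⟪u, v⟫ + ‖v‖ ^ 2 := by
        have := sq_nonneg ‖u - v‖
        rw [norm_sub_sq_real] at this
        linarith
      nlinarith [mul_nonneg ha hb]
    linarith
  constructor
  · -- convex in θ
    intro p
    refine ⟨convex_univ, ?_⟩
    intro θ₁ _ θ₂ _ a b ha hb hab
    simp only [smul_eq_mul, hφ]
    have he : p + γ • (a • θ₁ + b • θ₂) = a • (p + γ • θ₁) + b • (p + γ • θ₂) := by
      have h1 : a • p + b • p = p := by
        rw [← add_smul, hab, one_smul]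
      calc p + γ • (a • θ₁ + b • θ₂)
          = (a • p + b • p) + γ • (a • θ₁ + b • θ₂) := by rw [h1]
        _ = a • (p + γ • θ₁) + b • (p + γ • θ₂) := by module
    rw [he]
    have hg := hgconv (p + γ • θ₁) (p + γ • θ₂) a b ha hb hab
    have hc : a * ‖p‖ ^ 2 + b * ‖p‖ ^ 2 = ‖p‖ ^ 2 := by
      rw [← add_mul, hab, one_mul]
    have hnum : ‖proj (a • (p + γ • θ₁) + b • (p + γ • θ₂))‖ ^ 2 - ‖p‖ ^ 2
        ≤ a * (‖proj (p + γ • θ₁)‖ ^ 2 - ‖p‖ ^ 2)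
          + b * (‖proj (p + γ • θ₂)‖ ^ 2 - ‖p‖ ^ 2) := by
      have e1 : a * (‖proj (p + γ • θ₁)‖ ^ 2 - ‖p‖ ^ 2)
          + b * (‖proj (p + γ • θ₂)‖ ^ 2 - ‖p‖ ^ 2)
          = a * ‖proj (p + γ • θ₁)‖ ^ 2 + b * ‖proj (p + γ • θ₂)‖ ^ 2
            - (a * ‖p‖ ^ 2 + b * ‖p‖ ^ 2) := by ring
      rw [e1, hc]
      linarith
    calc (‖proj (a • (p + γ • θ₁) + b • (p + γ • θ₂))‖ ^ 2 - ‖p‖ ^ 2) / (2 * γ)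
        ≤ (a * (‖proj (p + γ • θ₁)‖ ^ 2 - ‖p‖ ^ 2)
            + b * (‖proj (p + γ • θ₂)‖ ^ 2 - ‖p‖ ^ 2)) / (2 * γ) := by gcongr
      _ = a * ((‖proj (p + γ • θ₁)‖ ^ 2 - ‖p‖ ^ 2) / (2 * γ))
            + b * ((‖proj (p + γ • θ₂)‖ ^ 2 - ‖p‖ ^ 2) / (2 * γ)) := by ring
  · -- concave in p
    intro θ
    -- reformulation of φ
    have hrep : ∀ p, φ θ p = ⟪p, θ⟫ + γ * ‖θ‖ ^ 2 / 2
        - ‖(p + γ • θ) - proj (p + γ • θ)‖ ^ 2 / (2 * γ) := by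
      intro p
      set x := p + γ • θ with hx
      have ho : ‖x‖ ^ 2 = ‖proj x‖ ^ 2 + ‖x - proj x‖ ^ 2 := by
        have e : x = proj x + (x - proj x) := by abel
        calc ‖x‖ ^ 2 = ‖proj x + (x - proj x)‖ ^ 2 := by rw [← e]
        _ = ‖proj x‖ ^ 2 + 2 * ⟪proj x, x - proj x⟫ + ‖x - proj x‖ ^ 2 := by
            rw [norm_add_sq_real]
        _ = ‖proj x‖ ^ 2 + ‖x - proj x‖ ^ 2 := by rw [horth x]; ring
      have hx2 : ‖x‖ ^ 2 = ‖p‖ ^ 2 + 2 * (γ * ⟪p, θ⟫) + γ ^ 2 * ‖θ‖ ^ 2 := by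
        rw [hx, norm_add_sq_real, real_inner_smul_right, norm_smul]
        simp [abs_of_pos hγ]
        ring
      rw [hφ]
      rw [show ‖proj x‖ ^ 2 = ‖x‖ ^ 2 - ‖x - proj x‖ ^ 2 by linarith]
      rw [hx2]
      field_simp
      ring
    refine ⟨convex_univ, ?_⟩
    intro p₁ _ p₂ _ a b ha hb hab
    simp only [smul_eq_mul, hrep]
    have hb1 : b = 1 - a := by linarith
    subst hb1
    have he : (a • p₁ + (1 - a) • p₂) + γ • θ
        = a • (p₁ + γ • θ) + (1 - a) • (p₂ + γ • θ) := by module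
    have hd := hdconv (p₁ + γ • θ) (p₂ + γ • θ) a (1 - a) ha hb (by ring)
    rw [← he] at hd
    have hdd : ‖(a • p₁ + (1 - a) • p₂ + γ • θ) - proj (a • p₁ + (1 - a) • p₂ + γ • θ)‖ ^ 2 / (2 * γ)
        ≤ (a * ‖(p₁ + γ • θ) - proj (p₁ + γ • θ)‖ ^ 2
          + (1 - a) * ‖(p₂ + γ • θ) - proj (p₂ + γ • θ)‖ ^ 2) / (2 * γ) := by gcongr
    have hiz : ⟪a • p₁ + (1 - a) • p₂, θ⟫ = a * ⟪p₁, θ⟫ + (1 - a) * ⟪p₂, θ⟫ := by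
      rw [inner_add_left, real_inner_smul_left, real_inner_smul_left]
    rw [hiz]
    have hsplit : (a * ‖(p₁ + γ • θ) - proj (p₁ + γ • θ)‖ ^ 2
          + (1 - a) * ‖(p₂ + γ • θ) - proj (p₂ + γ • θ)‖ ^ 2) / (2 * γ)
        = a * (‖(p₁ + γ • θ) - proj (p₁ + γ • θ)‖ ^ 2 / (2 * γ))
          + (1 - a) * (‖(p₂ + γ • θ) - proj (p₂ + γ • θ)‖ ^ 2 / (2 * γ)) := by
      ring
    rw [hsplit] at hdd
    linarith
end

section
/- For all θ, p ∈ ℝ^m: the function θ' ↦ φ(θ', p) is differentiable at θ with gradient ∇_θ φ(θ, p) = Π(p + γθ), and the function p' ↦ φ(θ, p') is differentiable at p with gradient ∇_p φ(θ, p) = (Π(p + γθ) − p)/γ. -/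
open RealInnerProductSpace

open Filter in
lemma hasGradientAt_of_sq_bound {m : ℕ} (f : EuclideanSpace ℝ (Fin m) → ℝ)
    (g z₀ : EuclideanSpace ℝ (Fin m)) (K : ℝ) (hK : 0 ≤ K)
    (h : ∀ z, |f z - f z₀ - ⟪g, z - z₀⟫| ≤ K * ‖z - z₀‖ ^ 2) :
    HasGradientAt f g z₀ := by
  rw [hasGradientAt_iff_isLittleO, Asymptotics.isLittleO_iff]
  intro c hc
  have hball : Metric.ball z₀ (c / (K + 1)) ∈ nhds z₀ :=
    Metric.ball_mem_nhds _ (by positivity)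
  filter_upwards [hball] with z hz
  have hz' : ‖z - z₀‖ < c / (K + 1) := by
    rwa [Metric.mem_ball, dist_eq_norm] at hz
  have h1 : K * ‖z - z₀‖ ^ 2 ≤ c * ‖z - z₀‖ := by
    have hn : (0:ℝ) ≤ ‖z - z₀‖ := norm_nonneg _
    have : K * ‖z - z₀‖ ≤ c := by
      calc K * ‖z - z₀‖ ≤ (K + 1) * (c / (K + 1)) := by
            apply mul_le_mul (by linarith) hz'.le hn (by positivity)
        _ = c := by field_simp
    calc K * ‖z - z₀‖ ^ 2 = (K * ‖z - z₀‖) * ‖z - z₀‖ := by ring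
      _ ≤ c * ‖z - z₀‖ := by apply mul_le_mul_of_nonneg_right this hn
  calc ‖f z - f z₀ - ⟪g, z - z₀⟫‖ = |f z - f z₀ - ⟪g, z - z₀⟫| := rfl
    _ ≤ K * ‖z - z₀‖ ^ 2 := h z
    _ ≤ c * ‖z - z₀‖ := h1

/-- Theorem 2.3(ii): with `φ(θ, p) = (‖Π(p + γθ)‖² − ‖p‖²)/(2γ)`, where `Π` is the
Euclidean projection onto the dual cone `C*`: `θ' ↦ φ(θ', p)` is differentiable at `θ`
with gradient `Π(p + γθ)`, and `p' ↦ φ(θ, p')` is differentiable at `p` with gradient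
`(Π(p + γθ) − p)/γ`. -/
theorem phi_gradients {m : ℕ}
    (C : Set (EuclideanSpace ℝ (Fin m)))
    (hC_ne : C.Nonempty) (hC_closed : IsClosed C) (hC_convex : Convex ℝ C)
    (hC_cone : ∀ a b : ℝ, 0 ≤ a → 0 ≤ b → ∀ x ∈ C, ∀ y ∈ C, a • x + b • y ∈ C)
    (Cstar : Set (EuclideanSpace ℝ (Fin m)))
    (hCstar : Cstar = {p : EuclideanSpace ℝ (Fin m) | ∀ x ∈ C, 0 ≤ ⟪p, x⟫})
    (proj : EuclideanSpace ℝ (Fin m) → EuclideanSpace ℝ (Fin m))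
    (hproj_mem : ∀ x, proj x ∈ Cstar)
    (hproj_char : ∀ x, ∀ q ∈ Cstar, ⟪q - proj x, x - proj x⟫ ≤ 0)
    (γ : ℝ) (hγ : 0 < γ)
    (φ : EuclideanSpace ℝ (Fin m) → EuclideanSpace ℝ (Fin m) → ℝ)
    (hφ : ∀ θ p, φ θ p = (‖proj (p + γ • θ)‖ ^ 2 - ‖p‖ ^ 2) / (2 * γ))
    (θ p : EuclideanSpace ℝ (Fin m)) :
    HasGradientAt (fun θ' => φ θ' p) (proj (p + γ • θ)) θ ∧
      HasGradientAt (fun p' => φ θ p') (γ⁻¹ • (proj (p + γ • θ) - p)) p := by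
  -- 0 ∈ C*
  have h0 : (0 : EuclideanSpace ℝ (Fin m)) ∈ Cstar := by
    rw [hCstar]; intro x hx; simp
  -- 2 • proj x ∈ C*
  have h2 : ∀ x, (2:ℝ) • proj x ∈ Cstar := by
    intro x
    have hm := hproj_mem x
    rw [hCstar] at hm ⊢
    intro z hz
    rw [real_inner_smul_left]
    have := hm z hz
    linarith
  -- Moreau orthogonality : ⟪proj x, x - proj x⟫ = 0
  have horth : ∀ x, ⟪proj x, x - proj x⟫ = 0 := by
    intro x
    have ha := hproj_char x 0 h0
    have hb := hproj_char x ((2:ℝ) • proj x) (h2 x)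
    rw [zero_sub, inner_neg_left] at ha
    have hbb : ⟪(2:ℝ) • proj x - proj x, x - proj x⟫ = ⟪proj x, x - proj x⟫ := by
      congr 1
      module
    rw [hbb] at hb
    linarith
  -- the key quadratic bound
  have hB : ∀ x y, |‖proj y‖ ^ 2 - ‖proj x‖ ^ 2 - ⟪(2:ℝ) • proj x, y - x⟫| ≤ ‖y - x‖ ^ 2 := by
    intro x y
    set u := proj x with hu
    set v := proj y with hv
    have hux : ⟪u, x⟫ = ‖u‖ ^ 2 := by
      have := horth x
      rw [inner_sub_right, real_inner_self_eq_norm_sq] at this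
      linarith
    have hvy : ⟪v, y⟫ = ‖v‖ ^ 2 := by
      have := horth y
      rw [inner_sub_right, real_inner_self_eq_norm_sq] at this
      linarith
    have hC1 : ⟪u - v, y - v⟫ ≤ 0 := hproj_char y u (hproj_mem x)
    have hC2 : ⟪v - u, x - u⟫ ≤ 0 := hproj_char x v (hproj_mem y)
    have e1 : ⟪u - v, y - v⟫ = ⟪u, y⟫ - ⟪u, v⟫ - ⟪v, y⟫ + ‖v‖ ^ 2 := by
      rw [inner_sub_left, inner_sub_right, inner_sub_right, real_inner_self_eq_norm_sq]
      ring
    have e2 : ⟪v - u, x - u⟫ = ⟪v, x⟫ - ⟪v, u⟫ - ⟪u, x⟫ + ‖u‖ ^ 2 := by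
      rw [inner_sub_left, inner_sub_right, inner_sub_right, real_inner_self_eq_norm_sq]
      ring
    have e3 : ⟪(2:ℝ) • u, y - x⟫ = 2 * ⟪u, y⟫ - 2 * ⟪u, x⟫ := by
      rw [real_inner_smul_left, inner_sub_right]; try ring
    have e4 : ‖u - v‖ ^ 2 = ‖u‖ ^ 2 - 2 * ⟪u, v⟫ + ‖v‖ ^ 2 := by
      rw [norm_sub_sq_real]; try ring
    have e5 : ⟪u - v, x - y⟫ = ⟪u, x⟫ - ⟪u, y⟫ - ⟪v, x⟫ + ⟪v, y⟫ := by
      rw [inner_sub_left, inner_sub_right, inner_sub_right]; ring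
    have huv : ⟪u, v⟫ = ⟪v, u⟫ := real_inner_comm v u
    have hcs : ⟪u - v, x - y⟫ ≤ ‖u - v‖ * ‖x - y‖ := real_inner_le_norm _ _
    have hnn : ‖u - v‖ ^ 2 ≥ 0 := sq_nonneg _
    have hsq : (‖u - v‖ - ‖x - y‖) ^ 2 ≥ 0 := sq_nonneg _
    have hxy2 : ‖x - y‖ ^ 2 = ‖y - x‖ ^ 2 := by rw [norm_sub_rev]
    have h6 : 2 * (⟪u - v, x - y⟫) ≤ ‖u - v‖ ^ 2 + ‖x - y‖ ^ 2 := by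
      nlinarith [sq_nonneg (‖u - v‖ - ‖x - y‖), hcs]
    rw [abs_le, e3]
    constructor
    · -- lower bound : E ≥ 0 ≥ -‖y-x‖²
      have hE : ‖v‖ ^ 2 - ‖u‖ ^ 2 - (2 * ⟪u, y⟫ - 2 * ⟪u, x⟫) ≥ 0 := by
        linarith [hC1, e1, e4, hnn, hux, hvy]
      have := sq_nonneg ‖y - x‖
      linarith
    · -- upper bound
      rw [← hxy2]
      linarith [hC2, e2, e4, e5, h6, hux, hvy, huv]
  set x₀ := p + γ • θ with hx₀
  constructor
  · apply hasGradientAt_of_sq_bound _ _ _ (γ / 2) (by positivity)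
    intro z
    rw [hφ, hφ]
    have key := hB x₀ (p + γ • z)
    have hsub : (p + γ • z) - x₀ = γ • (z - θ) := by
      rw [hx₀]; module
    have hip : ⟪(2:ℝ) • proj x₀, (p + γ • z) - x₀⟫ = 2 * γ * ⟪proj x₀, z - θ⟫ := by
      rw [hsub, real_inner_smul_left, real_inner_smul_right]; ring
    rw [hip] at key
    have hnorm : ‖(p + γ • z) - x₀‖ ^ 2 = γ ^ 2 * ‖z - θ‖ ^ 2 := by
      rw [hsub, norm_smul, Real.norm_eq_abs, abs_of_pos hγ, mul_pow]
    rw [hnorm] at key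
    have hexp : (‖proj (p + γ • z)‖ ^ 2 - ‖p‖ ^ 2) / (2 * γ) -
        (‖proj (p + γ • θ)‖ ^ 2 - ‖p‖ ^ 2) / (2 * γ) - ⟪proj x₀, z - θ⟫
        = (‖proj (p + γ • z)‖ ^ 2 - ‖proj x₀‖ ^ 2 - 2 * γ * ⟪proj x₀, z - θ⟫) / (2 * γ) := by
      rw [hx₀]; field_simp; try ring
    rw [hexp, abs_div, abs_of_pos (by positivity : (0:ℝ) < 2 * γ),
      div_le_iff₀ (by positivity : (0:ℝ) < 2 * γ)]
    calc |‖proj (p + γ • z)‖ ^ 2 - ‖proj x₀‖ ^ 2 - 2 * γ * ⟪proj x₀, z - θ⟫|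
        ≤ γ ^ 2 * ‖z - θ‖ ^ 2 := key
      _ = γ / 2 * ‖z - θ‖ ^ 2 * (2 * γ) := by ring
  · apply hasGradientAt_of_sq_bound _ _ _ γ⁻¹ (by positivity)
    intro z
    rw [hφ, hφ]
    have key := hB x₀ (z + γ • θ)
    have hsub : (z + γ • θ) - x₀ = z - p := by
      rw [hx₀]; module
    rw [hsub] at key
    have hip : ⟪(2:ℝ) • proj x₀, z - p⟫ = 2 * ⟪proj x₀, z - p⟫ := by
      rw [real_inner_smul_left]
    rw [hip] at key
    have hnp : ‖z‖ ^ 2 - ‖p‖ ^ 2 - 2 * ⟪p, z - p⟫ = ‖z - p‖ ^ 2 := by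
      rw [norm_sub_sq_real, inner_sub_right, real_inner_self_eq_norm_sq,
        real_inner_comm]
      ring
    have hig : ⟪γ⁻¹ • (proj x₀ - p), z - p⟫
        = γ⁻¹ * (⟪proj x₀, z - p⟫ - ⟪p, z - p⟫) := by
      rw [real_inner_smul_left, inner_sub_left]
    have hexp : (‖proj (z + γ • θ)‖ ^ 2 - ‖z‖ ^ 2) / (2 * γ) -
        (‖proj (p + γ • θ)‖ ^ 2 - ‖p‖ ^ 2) / (2 * γ) - ⟪γ⁻¹ • (proj x₀ - p), z - p⟫
        = (‖proj (z + γ • θ)‖ ^ 2 - ‖proj x₀‖ ^ 2 - 2 * ⟪proj x₀, z - p⟫) / (2 * γ)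
          - (‖z‖ ^ 2 - ‖p‖ ^ 2 - 2 * ⟪p, z - p⟫) / (2 * γ) := by
      rw [hig, hx₀]; field_simp; try ring
    rw [hexp, hnp]
    have h2γ : (0:ℝ) < 2 * γ := by positivity
    calc |(‖proj (z + γ • θ)‖ ^ 2 - ‖proj x₀‖ ^ 2 - 2 * ⟪proj x₀, z - p⟫) / (2 * γ)
          - ‖z - p‖ ^ 2 / (2 * γ)|
        ≤ |(‖proj (z + γ • θ)‖ ^ 2 - ‖proj x₀‖ ^ 2 - 2 * ⟪proj x₀, z - p⟫) / (2 * γ)|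
          + |‖z - p‖ ^ 2 / (2 * γ)| := abs_sub _ _
      _ ≤ ‖z - p‖ ^ 2 / (2 * γ) + ‖z - p‖ ^ 2 / (2 * γ) := by
          gcongr
          · rw [abs_div, abs_of_pos h2γ, div_le_div_iff_of_pos_right h2γ]
            exact key
          · rw [abs_div, abs_of_pos h2γ, abs_of_nonneg (sq_nonneg _)]
      _ = γ⁻¹ * ‖z - p‖ ^ 2 := by field_simp; try ring
end

section
/- Define the augmented Lagrangian dual function ψ_γ(p) = min_{u∈U} L_γ(u, p) for p ∈ ℝ^m (the minimum is attained by coercivity of G+J on U). Then ψ_γ is concave on ℝ^m, and for every p ∈ ℝ^m and every minimizer û ∈ U of u ↦ L_γ(u, p), ψ_γ is differentiable at p with gradient ∇ψ_γ(p) = (Π(p + γΘ(û)) − p)/γ. -/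
open RealInnerProductSpace Topology Filter

section ProjHelpers

variable {F : Type*} [NormedAddCommGroup F] [InnerProductSpace ℝ F]
  {Cstar : Set F} {proj : F → F}

lemma proj_orth
    (hchar : ∀ x, ∀ q ∈ Cstar, ⟪q - proj x, x - proj x⟫ ≤ 0)
    (h0 : (0:F) ∈ Cstar) (h2 : ∀ x, (2:ℝ) • proj x ∈ Cstar) (x : F) :
    ⟪proj x, x - proj x⟫ = 0 := by
  have a := hchar x 0 h0
  have b := hchar x ((2:ℝ) • proj x) (h2 x)
  have e : (2:ℝ) • proj x - proj x = proj x := by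
    rw [two_smul]; abel
  rw [e] at b
  rw [zero_sub, inner_neg_left] at a
  linarith

lemma proj_inner_nonpos
    (hchar : ∀ x, ∀ q ∈ Cstar, ⟪q - proj x, x - proj x⟫ ≤ 0)
    (h0 : (0:F) ∈ Cstar) (h2 : ∀ x, (2:ℝ) • proj x ∈ Cstar)
    {q : F} (hq : q ∈ Cstar) (z : F) : ⟪q, z - proj z⟫ ≤ 0 := by
  have h := hchar z q hq
  have h' := proj_orth hchar h0 h2 z
  rw [inner_sub_left] at h
  linarith

lemma proj_nonexpansive
    (hmem : ∀ x, proj x ∈ Cstar)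
    (hchar : ∀ x, ∀ q ∈ Cstar, ⟪q - proj x, x - proj x⟫ ≤ 0)
    (x y : F) : ‖proj y - proj x‖ ≤ ‖y - x‖ := by
  have h1 := hchar x (proj y) (hmem y)
  have h2 := hchar y (proj x) (hmem x)
  have e : y - x = (y - proj y) - (x - proj x) + (proj y - proj x) := by abel
  have e2 : ⟪proj y - proj x, y - x⟫
      = ⟪proj y - proj x, y - proj y⟫ - ⟪proj y - proj x, x - proj x⟫ + ‖proj y - proj x‖^2 := by
    rw [e, inner_add_right, inner_sub_right, real_inner_self_eq_norm_sq]
  have e3 : ⟪proj y - proj x, y - proj y⟫ = -⟪proj x - proj y, y - proj y⟫ := by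
    rw [← inner_neg_left, neg_sub]
  have hle : ‖proj y - proj x‖^2 ≤ ⟪proj y - proj x, y - x⟫ := by
    rw [e2, e3]; linarith
  have hcs := real_inner_le_norm (proj y - proj x) (y - x)
  nlinarith [norm_nonneg (proj y - proj x), norm_nonneg (y - x)]

lemma proj_key_low
    (hmem : ∀ x, proj x ∈ Cstar)
    (hchar : ∀ x, ∀ q ∈ Cstar, ⟪q - proj x, x - proj x⟫ ≤ 0)
    (h0 : (0:F) ∈ Cstar) (h2 : ∀ x, (2:ℝ) • proj x ∈ Cstar)
    (x y : F) : 2 * ⟪proj x, y - x⟫ ≤ ‖proj y‖^2 - ‖proj x‖^2 := by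
  have horth := proj_orth hchar h0 h2 x
  have hB := proj_inner_nonpos hchar h0 h2 (hmem x) y
  have e1 : ‖proj y - proj x‖^2 = ‖proj y‖^2 - 2*⟪proj y, proj x⟫ + ‖proj x‖^2 :=
    norm_sub_sq_real _ _
  rw [inner_sub_right] at horth hB
  rw [inner_sub_right]
  have hc : ⟪proj y, proj x⟫ = ⟪proj x, proj y⟫ := real_inner_comm _ _
  have hx : ⟪proj x, proj x⟫ = ‖proj x‖^2 := real_inner_self_eq_norm_sq _
  nlinarith [sq_nonneg ‖proj y - proj x‖]

lemma proj_key_up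
    (hmem : ∀ x, proj x ∈ Cstar)
    (hchar : ∀ x, ∀ q ∈ Cstar, ⟪q - proj x, x - proj x⟫ ≤ 0)
    (h0 : (0:F) ∈ Cstar) (h2 : ∀ x, (2:ℝ) • proj x ∈ Cstar)
    (x y : F) : ‖proj y‖^2 - ‖proj x‖^2 ≤ 2 * ⟪proj x, y - x⟫ + 2 * ‖y - x‖^2 := by
  have hswap := proj_key_low hmem hchar h0 h2 y x
  have e : ⟪proj y, x - y⟫ = -⟪proj y, y - x⟫ := by rw [← inner_neg_right, neg_sub]
  have split : ⟪proj y - proj x, y - x⟫ = ⟪proj y, y - x⟫ - ⟪proj x, y - x⟫ :=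
    inner_sub_left _ _ _
  have hcs := real_inner_le_norm (proj y - proj x) (y - x)
  have hne := proj_nonexpansive hmem hchar x y
  nlinarith [norm_nonneg (y - x), norm_nonneg (proj y - proj x)]

end ProjHelpers

section ProjHelpers2

variable {F : Type*} [NormedAddCommGroup F] [InnerProductSpace ℝ F]
  {Cstar : Set F} {proj : F → F}

lemma proj_moreau
    (hchar : ∀ x, ∀ q ∈ Cstar, ⟪q - proj x, x - proj x⟫ ≤ 0)
    (h0 : (0:F) ∈ Cstar) (h2 : ∀ x, (2:ℝ) • proj x ∈ Cstar) (z : F) :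
    ‖proj z‖^2 = ‖z‖^2 - ‖z - proj z‖^2 := by
  have h := proj_orth hchar h0 h2 z
  have e : ‖z‖^2 = ‖(z - proj z) + proj z‖^2 := by rw [sub_add_cancel]
  rw [norm_add_sq_real] at e
  have h' : ⟪z - proj z, proj z⟫ = 0 := by rw [real_inner_comm]; exact h
  rw [h'] at e; linarith

lemma proj_dist_min
    (hchar : ∀ x, ∀ q ∈ Cstar, ⟪q - proj x, x - proj x⟫ ≤ 0)
    (z : F) {q : F} (hq : q ∈ Cstar) : ‖z - proj z‖ ≤ ‖z - q‖ := by
  have h := hchar z q hq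
  have e : z - q = (z - proj z) - (q - proj z) := by abel
  have e2 : ‖z - q‖^2 = ‖z - proj z‖^2 - 2*⟪z - proj z, q - proj z⟫ + ‖q - proj z‖^2 := by
    rw [e]; exact norm_sub_sq_real _ _
  have h' : ⟪z - proj z, q - proj z⟫ ≤ 0 := by rw [real_inner_comm]; exact h
  nlinarith [norm_nonneg (z - q), norm_nonneg (z - proj z), sq_nonneg ‖q - proj z‖]

lemma proj_mono
    (hmem : ∀ x, proj x ∈ Cstar)
    (hchar : ∀ x, ∀ q ∈ Cstar, ⟪q - proj x, x - proj x⟫ ≤ 0)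
    (h0 : (0:F) ∈ Cstar) (h2 : ∀ x, (2:ℝ) • proj x ∈ Cstar)
    {c : F} (hc : ∀ q ∈ Cstar, 0 ≤ ⟪q, c⟫) (z : F) :
    ‖proj (z - c)‖ ≤ ‖proj z‖ := by
  have h1 : ‖proj (z - c)‖^2 = ⟪proj (z - c), z - c⟫ := by
    have := proj_orth hchar h0 h2 (z - c)
    rw [inner_sub_right, real_inner_self_eq_norm_sq] at this
    linarith
  have h2' : ⟪proj (z - c), z - c⟫ ≤ ⟪proj (z - c), z⟫ := by
    rw [inner_sub_right]
    have := hc _ (hmem (z - c))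
    linarith
  have h3 : ⟪proj (z - c), z⟫ ≤ ⟪proj (z - c), proj z⟫ := by
    have := proj_inner_nonpos hchar h0 h2 (hmem (z - c)) z
    rw [inner_sub_right] at this
    linarith
  have h4 := real_inner_le_norm (proj (z - c)) (proj z)
  nlinarith [norm_nonneg (proj (z - c)), norm_nonneg (proj z)]

lemma proj_mid_le
    (hmem : ∀ x, proj x ∈ Cstar)
    (hchar : ∀ x, ∀ q ∈ Cstar, ⟪q - proj x, x - proj x⟫ ≤ 0)
    (h0 : (0:F) ∈ Cstar) (h2 : ∀ x, (2:ℝ) • proj x ∈ Cstar)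
    {x₁ x₂ xm : F} (hm : x₁ + x₂ = xm + xm) :
    2 * ‖proj xm‖^2 ≤ ‖proj x₁‖^2 + ‖proj x₂‖^2 := by
  have k1 := proj_key_low hmem hchar h0 h2 xm x₁
  have k2 := proj_key_low hmem hchar h0 h2 xm x₂
  have e : ⟪proj xm, x₁ - xm⟫ + ⟪proj xm, x₂ - xm⟫ = 0 := by
    rw [← inner_add_right]
    have : (x₁ - xm) + (x₂ - xm) = 0 := by
      have e' : (x₁ - xm) + (x₂ - xm) = (x₁ + x₂) - (xm + xm) := by abel
      rw [e', hm, sub_self]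
    rw [this, inner_zero_right]
  linarith

lemma proj_mid_eq
    (hmem : ∀ x, proj x ∈ Cstar)
    (hchar : ∀ x, ∀ q ∈ Cstar, ⟪q - proj x, x - proj x⟫ ≤ 0)
    (h0 : (0:F) ∈ Cstar) (h2 : ∀ x, (2:ℝ) • proj x ∈ Cstar)
    {x₁ x₂ xm : F} (hm : x₁ + x₂ = xm + xm)
    (hE : 2 * ‖proj xm‖^2 = ‖proj x₁‖^2 + ‖proj x₂‖^2) :
    proj x₁ = proj x₂ := by
  have k1 := proj_key_low hmem hchar h0 h2 xm x₁
  have k2 := proj_key_low hmem hchar h0 h2 xm x₂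
  have e : ⟪proj xm, x₁ - xm⟫ + ⟪proj xm, x₂ - xm⟫ = 0 := by
    rw [← inner_add_right]
    have : (x₁ - xm) + (x₂ - xm) = 0 := by
      have e' : (x₁ - xm) + (x₂ - xm) = (x₁ + x₂) - (xm + xm) := by abel
      rw [e', hm, sub_self]
    rw [this, inner_zero_right]
  have eq1 : 2 * ⟪proj xm, x₁ - xm⟫ = ‖proj x₁‖^2 - ‖proj xm‖^2 := by linarith
  have eq2 : 2 * ⟪proj xm, x₂ - xm⟫ = ‖proj x₂‖^2 - ‖proj xm‖^2 := by linarith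
  have main : ∀ (xi : F), 2 * ⟪proj xm, xi - xm⟫ = ‖proj xi‖^2 - ‖proj xm‖^2 →
      proj xm = proj xi := by
    intro xi heqi
    set w := proj xm - proj xi with hw
    have hsub : ∀ y : F, 2 * ⟪proj xm, y - xi⟫ ≤ ‖proj y‖^2 - ‖proj xi‖^2 := by
      intro y
      have hk := proj_key_low hmem hchar h0 h2 xm y
      have esplit : ⟪proj xm, y - xi⟫ = ⟪proj xm, y - xm⟫ + ⟪proj xm, xm - xi⟫ := by
        rw [← inner_add_right]
        congr 1; abel
      have eneg : ⟪proj xm, xm - xi⟫ = -⟪proj xm, xi - xm⟫ := by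
        rw [← inner_neg_right, neg_sub]
      rw [esplit, eneg]
      linarith
    have hup := proj_key_up hmem hchar h0 h2 xi (xi + (1/2 : ℝ) • w)
    have hlo := hsub (xi + (1/2 : ℝ) • w)
    have ed : (xi + (1/2:ℝ) • w) - xi = (1/2:ℝ) • w := by abel
    rw [ed] at hup hlo
    rw [real_inner_smul_right] at hup hlo
    have en : ‖(1/2:ℝ) • w‖^2 = (1/4) * ‖w‖^2 := by
      rw [norm_smul, Real.norm_eq_abs, mul_pow]
      norm_num
    rw [en] at hup
    have hinner_w : ⟪proj xm, w⟫ - ⟪proj xi, w⟫ = ‖w‖^2 := by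
      rw [← inner_sub_left, real_inner_self_eq_norm_sq]
    have : ‖w‖^2 ≤ 0 := by nlinarith
    have hw0 : w = 0 := by
      have := norm_nonneg w
      have hn : ‖w‖ = 0 := by nlinarith
      exact norm_eq_zero.mp hn
    have : proj xm = proj xi := by
      have := sub_eq_zero.mp hw0; exact this
    exact this
  have h1 := main x₁ eq1
  have h2' := main x₂ eq2
  rw [← h1, ← h2']

end ProjHelpers2

section ProjHelpers3

variable {F : Type*} [NormedAddCommGroup F] [InnerProductSpace ℝ F]
  {Cstar : Set F} {proj : F → F}

/-- two-sided quadratic expansion for the `φ`-part of the augmented Lagrangian. -/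
lemma proj_sand
    (hmem : ∀ x, proj x ∈ Cstar)
    (hchar : ∀ x, ∀ q ∈ Cstar, ⟪q - proj x, x - proj x⟫ ≤ 0)
    (h0 : (0:F) ∈ Cstar) (h2 : ∀ x, (2:ℝ) • proj x ∈ Cstar)
    {γ : ℝ} (hγ : 0 < γ) (θ p q : F) :
    |(‖proj (q + γ • θ)‖^2 - ‖q‖^2)/(2*γ) - (‖proj (p + γ • θ)‖^2 - ‖p‖^2)/(2*γ)
      - ⟪γ⁻¹ • (proj (p + γ • θ) - p), q - p⟫| ≤ ‖q - p‖^2/(2*γ) := by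
  have hyx : (q + γ • θ) - (p + γ • θ) = q - p := by abel
  have hlow := proj_key_low hmem hchar h0 h2 (p + γ • θ) (q + γ • θ)
  have hup := proj_key_up hmem hchar h0 h2 (p + γ • θ) (q + γ • θ)
  rw [hyx] at hlow hup
  have hq2 : ‖q‖^2 = ‖p‖^2 + 2*⟪p, q - p⟫ + ‖q - p‖^2 := by
    have e := norm_add_sq_real p (q - p)
    have e2 : p + (q - p) = q := by abel
    rw [e2] at e; exact e
  have hinner : ⟪γ⁻¹ • (proj (p + γ • θ) - p), q - p⟫
      = γ⁻¹ * (⟪proj (p + γ • θ), q - p⟫ - ⟪p, q - p⟫) := by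
    rw [real_inner_smul_left, inner_sub_left]
  have hγ' : γ ≠ 0 := ne_of_gt hγ
  have hexpr : (‖proj (q + γ • θ)‖^2 - ‖q‖^2)/(2*γ) - (‖proj (p + γ • θ)‖^2 - ‖p‖^2)/(2*γ)
      - ⟪γ⁻¹ • (proj (p + γ • θ) - p), q - p⟫
      = ((‖proj (q + γ • θ)‖^2 - ‖proj (p + γ • θ)‖^2)
          - 2*⟪proj (p + γ • θ), q - p⟫ - ‖q - p‖^2)/(2*γ) := by
    rw [hinner, hq2]; field_simp; ring
  rw [hexpr, abs_le]
  have h2γ : (0:ℝ) < 2*γ := by linarith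
  constructor
  · rw [← neg_div]
    exact (div_le_div_iff_of_pos_right h2γ).mpr (by linarith)
  · exact (div_le_div_iff_of_pos_right h2γ).mpr (by linarith)

/-- convexity of the squared distance to `Cstar`. -/
lemma proj_dist_convex
    (hmem : ∀ x, proj x ∈ Cstar)
    (hchar : ∀ x, ∀ q ∈ Cstar, ⟪q - proj x, x - proj x⟫ ≤ 0)
    (hconv : ∀ (a b : ℝ) (x y : F), 0 ≤ a → 0 ≤ b → x ∈ Cstar → y ∈ Cstar →
      a • x + b • y ∈ Cstar)
    (x y : F) (a b : ℝ) (ha : 0 ≤ a) (hb : 0 ≤ b) (hab : a + b = 1) :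
    ‖(a • x + b • y) - proj (a • x + b • y)‖^2
      ≤ a * ‖x - proj x‖^2 + b * ‖y - proj y‖^2 := by
  set w := a • x + b • y with hwdef
  have hq : a • proj x + b • proj y ∈ Cstar := hconv a b _ _ ha hb (hmem x) (hmem y)
  have h1 : ‖w - proj w‖ ≤ ‖w - (a • proj x + b • proj y)‖ := proj_dist_min hchar w hq
  have e : w - (a • proj x + b • proj y) = a • (x - proj x) + b • (y - proj y) := by
    rw [hwdef, smul_sub, smul_sub]; abel
  have h2 : ‖w - (a • proj x + b • proj y)‖ ≤ a * ‖x - proj x‖ + b * ‖y - proj y‖ := by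
    rw [e]
    refine (norm_add_le _ _).trans ?_
    rw [norm_smul, norm_smul, Real.norm_eq_abs, Real.norm_eq_abs,
      abs_of_nonneg ha, abs_of_nonneg hb]
  have h3 := h1.trans h2
  have hn1 := norm_nonneg (x - proj x)
  have hn2 := norm_nonneg (y - proj y)
  have hn3 := norm_nonneg (w - proj w)
  nlinarith [mul_nonneg (mul_nonneg ha hb) (sq_nonneg (‖x - proj x‖ - ‖y - proj y‖))]

/-- concavity inequality in `p` for fixed `θ`. -/
lemma proj_core_concave
    (hmem : ∀ x, proj x ∈ Cstar)
    (hchar : ∀ x, ∀ q ∈ Cstar, ⟪q - proj x, x - proj x⟫ ≤ 0)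
    (h0 : (0:F) ∈ Cstar) (h2 : ∀ x, (2:ℝ) • proj x ∈ Cstar)
    (hconv : ∀ (a b : ℝ) (x y : F), 0 ≤ a → 0 ≤ b → x ∈ Cstar → y ∈ Cstar →
      a • x + b • y ∈ Cstar)
    {γ : ℝ} (hγ : 0 < γ) (θ p q : F) (a b : ℝ)
    (ha : 0 ≤ a) (hb : 0 ≤ b) (hab : a + b = 1) :
    a * (‖proj (p + γ • θ)‖^2 - ‖p‖^2) + b * (‖proj (q + γ • θ)‖^2 - ‖q‖^2)
      ≤ ‖proj ((a • p + b • q) + γ • θ)‖^2 - ‖a • p + b • q‖^2 := by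
  have hcomb : a • (p + γ • θ) + b • (q + γ • θ) = (a • p + b • q) + γ • θ := by
    simp only [smul_add]
    rw [show a • p + a • (γ • θ) + (b • q + b • (γ • θ))
        = a • p + b • q + (a • (γ • θ) + b • (γ • θ)) from by abel,
      ← add_smul, hab, one_smul]
  have hd := proj_dist_convex hmem hchar hconv (p + γ • θ) (q + γ • θ) a b ha hb hab
  rw [hcomb] at hd
  have m1 := proj_moreau hchar h0 h2 (p + γ • θ)
  have m2 := proj_moreau hchar h0 h2 (q + γ • θ)
  have m3 := proj_moreau hchar h0 h2 ((a • p + b • q) + γ • θ)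
  have ex : ∀ v : F, ‖v + γ • θ‖^2 = ‖v‖^2 + 2*(γ*⟪v, θ⟫) + γ^2*‖θ‖^2 := by
    intro v
    rw [norm_add_sq_real, real_inner_smul_right, norm_smul, Real.norm_eq_abs,
      abs_of_pos hγ, mul_pow]
  have e1 := ex p
  have e2 := ex q
  have e3 := ex (a • p + b • q)
  have hw : ⟪a • p + b • q, θ⟫ = a*⟪p, θ⟫ + b*⟪q, θ⟫ := by
    rw [inner_add_left, real_inner_smul_left, real_inner_smul_left]
  have habT : (a + b)*(γ^2*‖θ‖^2) = γ^2*‖θ‖^2 := by rw [hab, one_mul]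
  rw [m1, m2, m3, e1, e2, e3, hw]
  nlinarith [hd, habT]

lemma arith_combine {g X Y Z c a b : ℝ} (hc : 0 < c) (h : a*X + b*Y ≤ Z) (hab : a + b = 1) :
    a*(g + X/c) + b*(g + Y/c) ≤ g + Z/c := by
  have h1 : (a*X + b*Y)/c ≤ Z/c := (div_le_div_iff_of_pos_right hc).mpr h
  have hc' : c ≠ 0 := ne_of_gt hc
  have h2 : a*(g + X/c) + b*(g + Y/c) = (a+b)*g + (a*X + b*Y)/c := by
    field_simp; ring
  rw [h2, hab, one_mul]
  linarith

end ProjHelpers3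

set_option maxHeartbeats 2000000 in
/-- Theorem 2.3(iii): the augmented Lagrangian dual function
`ψ_γ(p) = min_{u ∈ U} L_γ(u, p)` is concave on `ℝ^m`, and for every `p` and every
minimizer `û ∈ U` of `u ↦ L_γ(u,p)`, `ψ_γ` is differentiable at `p` with gradient
`(Π(p + γΘ(û)) − p)/γ`. -/
theorem dual_function_concave_and_gradient {n m : ℕ}
    (U : Set (EuclideanSpace ℝ (Fin n)))
    (hU_ne : U.Nonempty) (hU_closed : IsClosed U) (hU_convex : Convex ℝ U)
    (C : Set (EuclideanSpace ℝ (Fin m)))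
    (hC_ne : C.Nonempty) (hC_closed : IsClosed C) (hC_convex : Convex ℝ C)
    (hC_cone : ∀ a b : ℝ, 0 ≤ a → 0 ≤ b → ∀ x ∈ C, ∀ y ∈ C, a • x + b • y ∈ C)
    (Cstar : Set (EuclideanSpace ℝ (Fin m)))
    (hCstar : Cstar = {p : EuclideanSpace ℝ (Fin m) | ∀ x ∈ C, 0 ≤ ⟪p, x⟫})
    (proj : EuclideanSpace ℝ (Fin m) → EuclideanSpace ℝ (Fin m))
    (hproj_mem : ∀ x, proj x ∈ Cstar)
    (hproj_char : ∀ x, ∀ q ∈ Cstar, ⟪q - proj x, x - proj x⟫ ≤ 0)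
    (G : EuclideanSpace ℝ (Fin n) → ℝ)
    (G' : EuclideanSpace ℝ (Fin n) → EuclideanSpace ℝ (Fin n))
    (hG_grad : ∀ x, HasGradientAt G (G' x) x)
    (hG_convex : ConvexOn ℝ Set.univ G)
    (BG : ℝ) (hBG : ∀ x y, ‖G' x - G' y‖ ≤ BG * ‖x - y‖)
    (J : EuclideanSpace ℝ (Fin n) → ℝ)
    (hJ_convex : ConvexOn ℝ Set.univ J) (hJ_lsc : LowerSemicontinuous J)
    (hcoercive : ∀ u : ℕ → EuclideanSpace ℝ (Fin n), (∀ k, u k ∈ U) →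
      Filter.Tendsto (fun k => ‖u k‖) Filter.atTop Filter.atTop →
      Filter.Tendsto (fun k => G (u k) + J (u k)) Filter.atTop Filter.atTop)
    (Θ : EuclideanSpace ℝ (Fin n) → EuclideanSpace ℝ (Fin m))
    (hΘ_Cconvex : ∀ u v : EuclideanSpace ℝ (Fin n), ∀ α : ℝ, α ∈ Set.Icc (0:ℝ) 1 →
      -(Θ (α • u + (1 - α) • v) - α • Θ u - (1 - α) • Θ v) ∈ C)
    (τ : ℝ) (O : Set (EuclideanSpace ℝ (Fin n))) (hO : IsOpen O) (hUO : U ⊆ O)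
    (hΘ_lip : ∀ u ∈ O, ∀ v ∈ O, ‖Θ u - Θ v‖ ≤ τ * ‖u - v‖)
    (γ : ℝ) (hγ : 0 < γ)
    (Lγ : EuclideanSpace ℝ (Fin n) → EuclideanSpace ℝ (Fin m) → ℝ)
    (hLγ : ∀ u p, Lγ u p =
      G u + J u + (‖proj (p + γ • Θ u)‖ ^ 2 - ‖p‖ ^ 2) / (2 * γ))
    (ψγ : EuclideanSpace ℝ (Fin m) → ℝ)
    (hψγ_le : ∀ p, ∀ u ∈ U, ψγ p ≤ Lγ u p)
    (hψγ_attained : ∀ p, ∃ u ∈ U, ψγ p = Lγ u p) :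
    ConcaveOn ℝ Set.univ ψγ ∧
      ∀ p : EuclideanSpace ℝ (Fin m), ∀ uhat ∈ U, (∀ u ∈ U, Lγ uhat p ≤ Lγ u p) →
        HasGradientAt ψγ (γ⁻¹ • (proj (p + γ • Θ uhat) - p)) p := by
  classical
  -- basic cone facts
  have h0 : (0 : EuclideanSpace ℝ (Fin m)) ∈ Cstar := by
    rw [hCstar]; intro x hx; simp
  have h2 : ∀ x, (2:ℝ) • proj x ∈ Cstar := by
    intro x
    have hp := hproj_mem x
    rw [hCstar] at hp ⊢
    intro z hz
    rw [real_inner_smul_left]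
    have := hp z hz
    linarith
  have hconvS : ∀ (a b : ℝ) (x y : EuclideanSpace ℝ (Fin m)), 0 ≤ a → 0 ≤ b →
      x ∈ Cstar → y ∈ Cstar → a • x + b • y ∈ Cstar := by
    intro a b x y ha hb hx hy
    rw [hCstar] at hx hy ⊢
    intro z hz
    rw [inner_add_left, real_inner_smul_left, real_inner_smul_left]
    exact add_nonneg (mul_nonneg ha (hx z hz)) (mul_nonneg hb (hy z hz))
  have h2γ : (0:ℝ) < 2*γ := by linarith
  -- sandwich for Lγ in its second argument
  have hLs : ∀ u (r s : EuclideanSpace ℝ (Fin m)),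
      |Lγ u s - Lγ u r - ⟪γ⁻¹ • (proj (r + γ • Θ u) - r), s - r⟫| ≤ ‖s - r‖^2/(2*γ) := by
    intro u r s
    rw [hLγ, hLγ]
    rw [show ∀ gj A B I : ℝ, gj + A - (gj + B) - I = A - B - I from fun _ _ _ _ => by ring]
    exact proj_sand hproj_mem hproj_char h0 h2 hγ (Θ u) r s
  -- concavity of Lγ in its second argument
  have hLconc : ∀ u (r s : EuclideanSpace ℝ (Fin m)) (a b : ℝ), 0 ≤ a → 0 ≤ b → a + b = 1 →
      a * Lγ u r + b * Lγ u s ≤ Lγ u (a • r + b • s) := by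
    intro u r s a b ha hb hab
    rw [hLγ, hLγ, hLγ]
    exact arith_combine h2γ
      (proj_core_concave hproj_mem hproj_char h0 h2 hconvS hγ (Θ u) r s a b ha hb hab) hab
  constructor
  · -- concavity of ψγ
    refine ⟨convex_univ, ?_⟩
    intro x _ y _ a b ha hb hab
    obtain ⟨w, hwU, hwEq⟩ := hψγ_attained (a • x + b • y)
    rw [smul_eq_mul, smul_eq_mul, hwEq]
    calc a * ψγ x + b * ψγ y ≤ a * Lγ w x + b * Lγ w y :=
          add_le_add (mul_le_mul_of_nonneg_left (hψγ_le x w hwU) ha)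
            (mul_le_mul_of_nonneg_left (hψγ_le y w hwU) hb)
      _ ≤ Lγ w (a • x + b • y) := hLconc w x y a b ha hb hab
  · -- differentiability
    intro p uhat hhatU hhatMin
    have hpe : ψγ p = Lγ uhat p := by
      obtain ⟨u0, hu0, he⟩ := hψγ_attained p
      refine le_antisymm (hψγ_le p uhat hhatU) ?_
      rw [he]; exact hhatMin u0 hu0
    -- a measurable selection of minimizers
    choose sel hselU hselEq using hψγ_attained
    have hselMin : ∀ q, ∀ v ∈ U, Lγ (sel q) q ≤ Lγ v q := by
      intro q v hv
      rw [← hselEq q]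
      exact hψγ_le q v hv
    -- boundedness from coercivity
    have hbdd : ∀ M : ℝ, ∃ R : ℝ, ∀ u ∈ U, G u + J u ≤ M → ‖u‖ ≤ R := by
      intro M
      by_contra hcon
      push_neg at hcon
      choose f hfU hfM hfR using fun k : ℕ => hcon (k : ℝ)
      have hnorm : Filter.Tendsto (fun k => ‖f k‖) Filter.atTop Filter.atTop :=
        Filter.tendsto_atTop_mono (fun k => (hfR k).le) tendsto_natCast_atTop_atTop
      have hco := hcoercive f hfU hnorm
      obtain ⟨k, hk⟩ := (hco.eventually (Filter.eventually_gt_atTop M)).exists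
      exact absurd (hfM k) (not_le.mpr hk)
    -- continuity facts
    have hprojLip : ∀ x y : EuclideanSpace ℝ (Fin m), ‖proj x - proj y‖ ≤ ‖x - y‖ := by
      intro x y
      exact proj_nonexpansive hproj_mem hproj_char y x
    have hprojCont : Continuous proj := by
      refine LipschitzWith.continuous (K := 1) (LipschitzWith.of_dist_le_mul fun x y => ?_)
      rw [dist_eq_norm, dist_eq_norm, NNReal.coe_one, one_mul]
      exact hprojLip x y
    have hΘcont : ∀ u ∈ O, ContinuousAt Θ u := by
      intro u hu
      rw [Metric.continuousAt_iff]
      intro ε hε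
      obtain ⟨r, hr, hball⟩ := Metric.isOpen_iff.mp hO u hu
      have hK : (0:ℝ) < max τ 1 := lt_of_lt_of_le one_pos (le_max_right _ _)
      refine ⟨min (ε / max τ 1) r, by positivity, fun v hv => ?_⟩
      have hvO : v ∈ O := hball (Metric.mem_ball.mpr (lt_of_lt_of_le hv (min_le_right _ _)))
      have h1 : ‖Θ v - Θ u‖ ≤ τ * ‖v - u‖ := hΘ_lip v hvO u hu
      have h2 : τ * ‖v - u‖ ≤ max τ 1 * ‖v - u‖ :=
        mul_le_mul_of_nonneg_right (le_max_left _ _) (norm_nonneg _)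
      rw [dist_eq_norm] at hv ⊢
      calc ‖Θ v - Θ u‖ ≤ max τ 1 * ‖v - u‖ := h1.trans h2
        _ < max τ 1 * (ε / max τ 1) :=
            mul_lt_mul_of_pos_left (lt_of_lt_of_le hv (min_le_left _ _)) hK
        _ = ε := by field_simp
    have hLcont : ∀ u, Continuous (fun r : EuclideanSpace ℝ (Fin m) => Lγ u r) := by
      intro u
      rw [show (fun r : EuclideanSpace ℝ (Fin m) => Lγ u r)
          = fun r => G u + J u + (‖proj (r + γ • Θ u)‖^2 - ‖r‖^2)/(2*γ) from
          funext fun r => hLγ u r]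
      have h1 : Continuous fun r : EuclideanSpace ℝ (Fin m) => r + γ • Θ u :=
        continuous_id.add continuous_const
      exact continuous_const.add
        ((((hprojCont.comp h1).norm.pow 2).sub (continuous_norm.pow 2)).div_const _)
    -- the key uniqueness lemma: all minimizers at p give the same projection
    have hKey : ∀ u1 u2, u1 ∈ U → u2 ∈ U → (∀ v ∈ U, Lγ u1 p ≤ Lγ v p) →
        (∀ v ∈ U, Lγ u2 p ≤ Lγ v p) → proj (p + γ • Θ u1) = proj (p + γ • Θ u2) := by
      intro u1 u2 h1U h2U h1m h2m
      set um := (1/2:ℝ) • u1 + (1/2:ℝ) • u2 with humdef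
      have humU : um ∈ U := hU_convex h1U h2U (by norm_num) (by norm_num) (by norm_num)
      have hGm : G um ≤ (1/2)*G u1 + (1/2)*G u2 := by
        rw [humdef]
        have := hG_convex.2 (Set.mem_univ u1) (Set.mem_univ u2)
          (by norm_num : (0:ℝ) ≤ 1/2) (by norm_num : (0:ℝ) ≤ 1/2)
          (by norm_num : (1/2:ℝ) + 1/2 = 1)
        simpa [smul_eq_mul] using this
      have hJm : J um ≤ (1/2)*J u1 + (1/2)*J u2 := by
        rw [humdef]
        have := hJ_convex.2 (Set.mem_univ u1) (Set.mem_univ u2)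
          (by norm_num : (0:ℝ) ≤ 1/2) (by norm_num : (0:ℝ) ≤ 1/2)
          (by norm_num : (1/2:ℝ) + 1/2 = 1)
        simpa [smul_eq_mul] using this
      have hcC : -(Θ um - (1/2:ℝ) • Θ u1 - (1/2:ℝ) • Θ u2) ∈ C := by
        have h' := hΘ_Cconvex u1 u2 (1/2) (by constructor <;> norm_num)
        have h12 : (1:ℝ) - 1/2 = 1/2 := by norm_num
        rw [h12] at h'
        exact h'
      set c := -(Θ um - (1/2:ℝ) • Θ u1 - (1/2:ℝ) • Θ u2) with hcdef
      have hγc : γ • c ∈ C := by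
        have := hC_cone γ 0 hγ.le le_rfl c hcC c hcC
        simpa using this
      have hcs : ∀ z ∈ Cstar, 0 ≤ ⟪z, γ • c⟫ := by
        intro z hz
        rw [hCstar] at hz
        exact hz _ hγc
      set xm := p + γ • ((1/2:ℝ) • Θ u1 + (1/2:ℝ) • Θ u2) with hxmdef
      have hxe : p + γ • Θ um = xm - γ • c := by
        rw [hxmdef, hcdef]; module
      have hmsum : (p + γ • Θ u1) + (p + γ • Θ u2) = xm + xm := by
        rw [hxmdef]; module
      have hmono : ‖proj (p + γ • Θ um)‖ ≤ ‖proj xm‖ := by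
        rw [hxe]; exact proj_mono hproj_mem hproj_char h0 h2 hcs xm
      have hmono2 : ‖proj (p + γ • Θ um)‖^2 ≤ ‖proj xm‖^2 :=
        pow_le_pow_left₀ (norm_nonneg _) hmono 2
      have hmidle := proj_mid_le hproj_mem hproj_char h0 h2 hmsum
      have hA1 := h1m um humU
      have hA2 := h2m um humU
      rw [hLγ, hLγ] at hA1 hA2
      have hdiv : (‖proj (p + γ • Θ um)‖^2 - ‖p‖^2)/(2*γ) ≤ (‖proj xm‖^2 - ‖p‖^2)/(2*γ) :=
        (div_le_div_iff_of_pos_right h2γ).mpr (by linarith)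
      have hsum : (‖proj (p + γ • Θ u1)‖^2 - ‖p‖^2)/(2*γ)
          + (‖proj (p + γ • Θ u2)‖^2 - ‖p‖^2)/(2*γ)
          ≤ 2*((‖proj xm‖^2 - ‖p‖^2)/(2*γ)) := by
        linarith
      rw [← add_div, ← mul_div_assoc] at hsum
      have hsum' := (div_le_div_iff_of_pos_right h2γ).mp hsum
      have hE : 2 * ‖proj xm‖^2 = ‖proj (p + γ • Θ u1)‖^2 + ‖proj (p + γ • Θ u2)‖^2 := by
        linarith
      exact proj_mid_eq hproj_mem hproj_char h0 h2 hmsum hE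
    -- continuity of the selected projection at p
    have H : ∀ ε > 0, ∃ δ > 0, ∀ q, dist q p < δ →
        ‖proj (q + γ • Θ (sel q)) - proj (p + γ • Θ uhat)‖ < ε := by
      by_contra hcon
      push_neg at hcon
      obtain ⟨ε, hε, hδ⟩ := hcon
      choose qf hq1 hq2 using fun k : ℕ => hδ (1/((k:ℝ)+1)) (by positivity)
      have hqtend : Filter.Tendsto qf Filter.atTop (𝓝 p) := by
        rw [tendsto_iff_dist_tendsto_zero]
        exact squeeze_zero (fun k => dist_nonneg) (fun k => (hq1 k).le)
          tendsto_one_div_add_atTop_nhds_zero_nat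
      have hq1' : ∀ k, ‖qf k - p‖ ≤ 1 := by
        intro k
        rw [← dist_eq_norm]
        refine (hq1 k).le.trans ?_
        rw [div_le_one (by positivity)]
        linarith [show (0:ℝ) ≤ (k:ℝ) from Nat.cast_nonneg k]
      set G0 := γ⁻¹ • (proj (p + γ • Θ uhat) - p) with hG0
      have hupL : ∀ q, Lγ uhat q ≤ Lγ uhat p + ‖G0‖*‖q - p‖ + ‖q - p‖^2/(2*γ) := by
        intro q
        have h1 := (abs_le.mp (hLs uhat p q)).2
        have h3 : ⟪G0, q - p⟫ ≤ ‖G0‖*‖q - p‖ :=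
          (le_abs_self _).trans (abs_real_inner_le_norm G0 (q - p))
        linarith
      set M := Lγ uhat p + ‖G0‖*1 + 1/(2*γ) + (‖p‖+1)^2/(2*γ) with hM
      set v : ℕ → EuclideanSpace ℝ (Fin n) := fun k => sel (qf k) with hv
      have hGJ : ∀ k, G (v k) + J (v k) ≤ M := by
        intro k
        have hqn : ‖qf k‖ ≤ ‖p‖ + 1 := by
          have e : qf k = p + (qf k - p) := by abel
          calc ‖qf k‖ = ‖p + (qf k - p)‖ := by rw [← e]
            _ ≤ ‖p‖ + ‖qf k - p‖ := norm_add_le _ _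
            _ ≤ ‖p‖ + 1 := by linarith [hq1' k]
        have hqn2 : ‖qf k‖^2 ≤ (‖p‖+1)^2 := by
          refine pow_le_pow_left₀ (norm_nonneg _) hqn 2
        have hL1 : Lγ (v k) (qf k) ≤ Lγ uhat (qf k) := hselMin (qf k) uhat hhatU
        have hL2 : Lγ uhat (qf k) ≤ Lγ uhat p + ‖G0‖*1 + 1/(2*γ) := by
          have := hupL (qf k)
          have hb : ‖G0‖*‖qf k - p‖ ≤ ‖G0‖*1 :=
            mul_le_mul_of_nonneg_left (hq1' k) (norm_nonneg _)
          have hb2 : ‖qf k - p‖^2/(2*γ) ≤ 1/(2*γ) := by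
            refine (div_le_div_iff_of_pos_right h2γ).mpr ?_
            have := hq1' k
            nlinarith [norm_nonneg (qf k - p)]
          linarith
        have hGJk : G (v k) + J (v k) ≤ Lγ (v k) (qf k) + (‖p‖+1)^2/(2*γ) := by
          have heq := hLγ (v k) (qf k)
          have hge : -(‖qf k‖^2)/(2*γ) ≤ (‖proj (qf k + γ • Θ (v k))‖^2 - ‖qf k‖^2)/(2*γ) := by
            refine (div_le_div_iff_of_pos_right h2γ).mpr ?_
            nlinarith [sq_nonneg ‖proj (qf k + γ • Θ (v k))‖]
          have hge2 : -((‖p‖+1)^2)/(2*γ) ≤ -(‖qf k‖^2)/(2*γ) := by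
            refine (div_le_div_iff_of_pos_right h2γ).mpr (by linarith)
          have e3 : -((‖p‖+1)^2)/(2*γ) = -((‖p‖+1)^2/(2*γ)) := by ring
          rw [e3] at hge2
          linarith
        rw [hM]
        linarith
      obtain ⟨R, hR⟩ := hbdd M
      have hRk : ∀ k, v k ∈ Metric.closedBall (0 : EuclideanSpace ℝ (Fin n)) R := by
        intro k
        rw [mem_closedBall_zero_iff]
        exact hR (v k) (hselU (qf k)) (hGJ k)
      obtain ⟨ustar, _, φ, hφmono, hφtend⟩ :=
        tendsto_subseq_of_bounded Metric.isBounded_closedBall hRk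
      have hustarU : ustar ∈ U :=
        hU_closed.mem_of_tendsto hφtend
          (Filter.Eventually.of_forall (fun k => hselU (qf (φ k))))
      have hqφ : Filter.Tendsto (fun k => qf (φ k)) Filter.atTop (𝓝 p) :=
        hqtend.comp hφmono.tendsto_atTop
      have hΘtend : Filter.Tendsto (fun k => Θ (v (φ k))) Filter.atTop (𝓝 (Θ ustar)) :=
        ((hΘcont ustar (hUO hustarU)).tendsto).comp hφtend
      have hxtend : Filter.Tendsto (fun k => qf (φ k) + γ • Θ (v (φ k)))
          Filter.atTop (𝓝 (p + γ • Θ ustar)) :=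
        hqφ.add (hΘtend.const_smul γ)
      have hPtend : Filter.Tendsto (fun k => proj (qf (φ k) + γ • Θ (v (φ k))))
          Filter.atTop (𝓝 (proj (p + γ • Θ ustar))) :=
        (hprojCont.tendsto _).comp hxtend
      have hGtend : Filter.Tendsto (fun k => G (v (φ k))) Filter.atTop (𝓝 (G ustar)) :=
        ((hG_grad ustar).continuousAt.tendsto).comp hφtend
      have hΦtend : Filter.Tendsto
          (fun k => G (v (φ k))
            + (‖proj (qf (φ k) + γ • Θ (v (φ k)))‖^2 - ‖qf (φ k)‖^2)/(2*γ))
          Filter.atTop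
          (𝓝 (G ustar + (‖proj (p + γ • Θ ustar)‖^2 - ‖p‖^2)/(2*γ))) :=
        hGtend.add (((hPtend.norm.pow 2).sub (hqφ.norm.pow 2)).div_const (2*γ))
      have hmin_star : ∀ w ∈ U, Lγ ustar p ≤ Lγ w p := by
        intro w hw
        by_contra hlt
        push_neg at hlt
        have hε'pos : 0 < (Lγ ustar p - Lγ w p)/4 := by linarith
        set ε' := (Lγ ustar p - Lγ w p)/4 with hε'
        have e1 : ∀ᶠ k in Filter.atTop, Lγ w (qf (φ k)) < Lγ w p + ε' :=
          (((hLcont w).tendsto p).comp hqφ).eventually_lt_const (by linarith)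
        have e2 : ∀ᶠ k in Filter.atTop,
            G ustar + (‖proj (p + γ • Θ ustar)‖^2 - ‖p‖^2)/(2*γ) - ε'
              < G (v (φ k)) + (‖proj (qf (φ k) + γ • Θ (v (φ k)))‖^2 - ‖qf (φ k)‖^2)/(2*γ) :=
          hΦtend.eventually_const_lt (by linarith)
        have e3 : ∀ᶠ k in Filter.atTop, J ustar - ε' < J (v (φ k)) :=
          hφtend.eventually (hJ_lsc ustar (J ustar - ε') (by linarith))
        obtain ⟨k, h1, h2, h3⟩ := (e1.and (e2.and e3)).exists
        have hmin_k : Lγ (v (φ k)) (qf (φ k)) ≤ Lγ w (qf (φ k)) :=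
          hselMin (qf (φ k)) w hw
        rw [hLγ] at hmin_k
        have hexp : Lγ ustar p
            = G ustar + J ustar + (‖proj (p + γ • Θ ustar)‖^2 - ‖p‖^2)/(2*γ) := hLγ ustar p
        linarith
      have hproj_eq : proj (p + γ • Θ ustar) = proj (p + γ • Θ uhat) :=
        hKey ustar uhat hustarU hhatU hmin_star hhatMin
      rw [hproj_eq] at hPtend
      have hdist : Filter.Tendsto
          (fun k => ‖proj (qf (φ k) + γ • Θ (v (φ k))) - proj (p + γ • Θ uhat)‖)
          Filter.atTop (𝓝 0) := by
        rw [← tendsto_iff_norm_sub_tendsto_zero]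
        exact hPtend
      obtain ⟨k, hk⟩ := (hdist.eventually_lt_const hε).exists
      exact absurd (hq2 (φ k)) (not_le.mpr hk)
    -- final assembly
    rw [hasGradientAt_iff_isLittleO, Asymptotics.isLittleO_iff]
    intro ε hε
    obtain ⟨δ₁, hδ₁, hH⟩ := H (ε*γ/4) (by positivity)
    have hδ2 : (0:ℝ) < min δ₁ (ε*γ/4) := lt_min hδ₁ (by positivity)
    rw [Metric.eventually_nhds_iff]
    refine ⟨min δ₁ (ε*γ/4), hδ2, fun {q} hq => ?_⟩
    have hqp : ‖q - p‖ < min δ₁ (ε*γ/4) := by rwa [← dist_eq_norm]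
    have hnq1 : ‖q - p‖ ≤ ε*γ/4 := (hqp.trans_le (min_le_right _ _)).le
    have hPq : ‖proj (q + γ • Θ (sel q)) - proj (p + γ • Θ uhat)‖ < ε*γ/4 :=
      hH q (lt_of_lt_of_le hq (min_le_left _ _))
    have hupper : ψγ q - ψγ p - ⟪γ⁻¹ • (proj (p + γ • Θ uhat) - p), q - p⟫
        ≤ ‖q - p‖^2/(2*γ) := by
      have h1 := (abs_le.mp (hLs uhat p q)).2
      have h2 : ψγ q ≤ Lγ uhat q := hψγ_le q uhat hhatU
      have h3 : ψγ p = Lγ uhat p := hpe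
      linarith
    set gq := γ⁻¹ • (proj (q + γ • Θ (sel q)) - q) with hgq
    have hlower1 : -(‖q - p‖^2/(2*γ)) ≤ ψγ q - ψγ p - ⟪gq, q - p⟫ := by
      have h1 := (abs_le.mp (hLs (sel q) q p)).2
      have h2 : ψγ p ≤ Lγ (sel q) p := hψγ_le p (sel q) (hselU q)
      have h3 : ψγ q = Lγ (sel q) q := hselEq q
      have h4 : ⟪gq, p - q⟫ = -⟪gq, q - p⟫ := by
        rw [show p - q = -(q - p) from by abel, inner_neg_right]
      have h5 : ‖p - q‖ = ‖q - p‖ := norm_sub_rev _ _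
      rw [h4, h5] at h1
      linarith
    have hdiff : -(ε/2 * ‖q - p‖)
        ≤ ⟪gq, q - p⟫ - ⟪γ⁻¹ • (proj (p + γ • Θ uhat) - p), q - p⟫ := by
      have e : gq - γ⁻¹ • (proj (p + γ • Θ uhat) - p)
          = γ⁻¹ • ((proj (q + γ • Θ (sel q)) - proj (p + γ • Θ uhat)) - (q - p)) := by
        rw [hgq]; module
      have hnorm : ‖gq - γ⁻¹ • (proj (p + γ • Θ uhat) - p)‖ ≤ ε/2 := by
        rw [e, norm_smul, Real.norm_eq_abs, abs_of_pos (inv_pos.mpr hγ)]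
        have h6 : ‖(proj (q + γ • Θ (sel q)) - proj (p + γ • Θ uhat)) - (q - p)‖
            ≤ ε*γ/4 + ε*γ/4 := by
          refine (norm_sub_le _ _).trans ?_
          exact add_le_add hPq.le hnq1
        calc γ⁻¹ * ‖(proj (q + γ • Θ (sel q)) - proj (p + γ • Θ uhat)) - (q - p)‖
            ≤ γ⁻¹ * (ε*γ/4 + ε*γ/4) := mul_le_mul_of_nonneg_left h6 (by positivity)
          _ = ε/2 := by field_simp; ring
      have h7 : |⟪gq - γ⁻¹ • (proj (p + γ • Θ uhat) - p), q - p⟫| ≤ (ε/2) * ‖q - p‖ :=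
        (abs_real_inner_le_norm _ _).trans
          (mul_le_mul_of_nonneg_right hnorm (norm_nonneg _))
      have h8 := neg_abs_le ⟪gq - γ⁻¹ • (proj (p + γ • Θ uhat) - p), q - p⟫
      rw [inner_sub_left] at h7 h8
      have := (abs_le.mp h7).1
      linarith
    have hb : ‖q - p‖^2/(2*γ) ≤ ε/2 * ‖q - p‖ := by
      rw [div_le_iff₀ h2γ]
      nlinarith [norm_nonneg (q - p)]
    rw [Real.norm_eq_abs, abs_le]
    constructor
    · have : -(ε * ‖q - p‖) ≤ -(ε/2 * ‖q - p‖) - ε/2 * ‖q - p‖ := by linarith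
      linarith
    · have hN : 0 ≤ ‖q - p‖ := norm_nonneg _
      nlinarith
end

section
/- The set of saddle points of the ordinary Lagrangian L on U × C* coincides with the set of saddle points of the augmented Lagrangian L_γ on U × ℝ^m; that is, for (u*, p*) ∈ U × C*, L(u*, p) ≤ L(u*, p*) ≤ L(u, p*) for all u ∈ U and p ∈ C* if and only if L_γ(u*, p) ≤ L_γ(u*, p*) ≤ L_γ(u, p*) for all u ∈ U and p ∈ ℝ^m (and any saddle point of L_γ on U × ℝ^m automatically has p* ∈ C*). -/
open RealInnerProductSpace

section Aux
variable {E : Type*} [NormedAddCommGroup E] [InnerProductSpace ℝ E]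
variable {K : Set E} {proj : E → E}

lemma sqle_aux {a b : ℝ} (hb : 0 ≤ b) (h : a^2 ≤ b^2) : a ≤ b := by
  nlinarith [sq_nonneg (a - b), sq_nonneg (a + b)]

lemma keyle_aux {a b : ℝ} (ha : 0 ≤ a) (hb : 0 ≤ b) (h : a^2 ≤ a*b) : a ≤ b := by
  rcases eq_or_lt_of_le ha with h0 | h0
  · linarith
  · nlinarith

lemma proj_orth_s7 (hmem : ∀ x, proj x ∈ K) (hchar : ∀ x, ∀ q ∈ K, ⟪q - proj x, x - proj x⟫ ≤ 0)
    (h0 : (0:E) ∈ K) (hsmul : ∀ c : ℝ, 0 ≤ c → ∀ p ∈ K, c • p ∈ K) (x : E) :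
    ⟪proj x, x - proj x⟫ = 0 := by
  have h1 := hchar x 0 h0
  have h2 := hchar x ((2:ℝ) • proj x) (hsmul 2 (by norm_num) _ (hmem x))
  have e1 : (0:E) - proj x = -(proj x) := by abel
  have e2 : ((2:ℝ) • proj x - proj x) = proj x := by module
  rw [e1, inner_neg_left] at h1
  rw [e2] at h2
  linarith

lemma proj_normsq (hmem : ∀ x, proj x ∈ K) (hchar : ∀ x, ∀ q ∈ K, ⟪q - proj x, x - proj x⟫ ≤ 0)
    (h0 : (0:E) ∈ K) (hsmul : ∀ c : ℝ, 0 ≤ c → ∀ p ∈ K, c • p ∈ K) (x : E) :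
    ‖proj x‖^2 = ⟪proj x, x⟫ := by
  have h := proj_orth_s7 hmem hchar h0 hsmul x
  rw [inner_sub_right, real_inner_self_eq_norm_sq] at h
  linarith

lemma proj_uniq (hmem : ∀ x, proj x ∈ K) (hchar : ∀ x, ∀ q ∈ K, ⟪q - proj x, x - proj x⟫ ≤ 0)
    (x q : E) (hq : q ∈ K) (hch : ∀ r ∈ K, ⟪r - q, x - q⟫ ≤ 0) : proj x = q := by
  have h1 := hchar x q hq
  have h2 := hch (proj x) (hmem x)
  have e : ⟪proj x - q, x - q⟫ - ⟪proj x - q, x - proj x⟫ = ‖proj x - q‖^2 := by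
    rw [← inner_sub_right]
    have e2 : (x - q) - (x - proj x) = proj x - q := by abel
    rw [e2, real_inner_self_eq_norm_sq]
  have h1' : ⟪q - proj x, x - proj x⟫ = -⟪proj x - q, x - proj x⟫ := by
    have : q - proj x = -(proj x - q) := by abel
    rw [this, inner_neg_left]
  have hsq : ‖proj x - q‖^2 ≤ 0 := by linarith
  have : ‖proj x - q‖ = 0 := by nlinarith [norm_nonneg (proj x - q)]
  exact sub_eq_zero.mp (norm_eq_zero.mp this)

lemma proj_nearest (hmem : ∀ x, proj x ∈ K) (hchar : ∀ x, ∀ q ∈ K, ⟪q - proj x, x - proj x⟫ ≤ 0)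
    (x : E) (r : E) (hr : r ∈ K) : ‖x - proj x‖ ≤ ‖x - r‖ := by
  have h := hchar x r hr
  have e : ‖x - r‖^2 = ‖x - proj x‖^2 + 2*⟪x - proj x, proj x - r⟫ + ‖proj x - r‖^2 := by
    have e1 : x - r = (x - proj x) + (proj x - r) := by abel
    rw [e1, norm_add_sq_real]
  have e2 : ⟪x - proj x, proj x - r⟫ = -⟪r - proj x, x - proj x⟫ := by
    have : proj x - r = -(r - proj x) := by abel
    rw [this, inner_neg_right, real_inner_comm]
  apply sqle_aux (norm_nonneg _)
  nlinarith [norm_nonneg (proj x - r)]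

lemma proj_pyth (hmem : ∀ x, proj x ∈ K) (hchar : ∀ x, ∀ q ∈ K, ⟪q - proj x, x - proj x⟫ ≤ 0)
    (h0 : (0:E) ∈ K) (hsmul : ∀ c : ℝ, 0 ≤ c → ∀ p ∈ K, c • p ∈ K) (x : E) :
    ‖x‖^2 = ‖proj x‖^2 + ‖x - proj x‖^2 := by
  have e : x = proj x + (x - proj x) := by abel
  conv_lhs => rw [e]
  rw [norm_add_sq_real, proj_orth_s7 hmem hchar h0 hsmul x]; ring


section Aux2
variable {E : Type*} [NormedAddCommGroup E] [InnerProductSpace ℝ E]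
variable {K : Set E} {proj : E → E} {γ : ℝ}

-- copies from aux1 assumed; here test standalone with sorried deps
lemma sqle_aux' {a b : ℝ} (hb : 0 ≤ b) (h : a^2 ≤ b^2) : a ≤ b := by
  nlinarith [sq_nonneg (a - b), sq_nonneg (a + b)]
lemma keyle_aux' {a b : ℝ} (ha : 0 ≤ a) (hb : 0 ≤ b) (h : a^2 ≤ a*b) : a ≤ b := by
  rcases eq_or_lt_of_le ha with h0 | h0
  · linarith
  · nlinarith

/-- If θ is in the polar of K, projection of p+γθ has norm ≤ ‖p‖. -/
lemma lemA (hmem : ∀ x, proj x ∈ K) (hchar : ∀ x, ∀ q ∈ K, ⟪q - proj x, x - proj x⟫ ≤ 0)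
    (h0 : (0:E) ∈ K) (hsmul : ∀ c : ℝ, 0 ≤ c → ∀ p ∈ K, c • p ∈ K)
    (hγ : 0 < γ) (p θ : E) (hpol : ∀ r ∈ K, ⟪r, θ⟫ ≤ 0) :
    ‖proj (p + γ • θ)‖ ≤ ‖p‖ := by
  have hsq : ‖proj (p + γ•θ)‖^2 = ⟪proj (p + γ•θ), p⟫ + γ * ⟪proj (p + γ•θ), θ⟫ := by
    rw [proj_normsq hmem hchar h0 hsmul, inner_add_right, real_inner_smul_right]
  have h2 := hpol _ (hmem (p + γ•θ))
  have h3 := real_inner_le_norm (proj (p + γ•θ)) p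
  exact keyle_aux' (norm_nonneg _) (norm_nonneg _) (by nlinarith)

/-- lower bound : ‖p‖² + 2γ⟨p,θ⟩ ≤ ‖proj(p+γθ)‖² for p ∈ K. -/
lemma lemB (hmem : ∀ x, proj x ∈ K) (hchar : ∀ x, ∀ q ∈ K, ⟪q - proj x, x - proj x⟫ ≤ 0)
    (h0 : (0:E) ∈ K) (hsmul : ∀ c : ℝ, 0 ≤ c → ∀ p ∈ K, c • p ∈ K)
    (hγ : 0 < γ) (p : E) (hp : p ∈ K) (θ : E) :
    ‖p‖^2 + 2*γ*⟪p, θ⟫ ≤ ‖proj (p + γ • θ)‖^2 := by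
  have hnear := proj_nearest hmem hchar (p + γ•θ) p hp
  have e1 : p + γ•θ - p = γ•θ := by abel
  rw [e1] at hnear
  have e2 : ‖γ•θ‖ = γ * ‖θ‖ := by rw [norm_smul, Real.norm_eq_abs, abs_of_pos hγ]
  rw [e2] at hnear
  have hpyth := proj_pyth hmem hchar h0 hsmul (p + γ•θ)
  have hwsq : ‖p + γ•θ‖^2 = ‖p‖^2 + 2*(γ*⟪p,θ⟫) + γ^2*‖θ‖^2 := by
    rw [norm_add_sq_real, real_inner_smul_right, norm_smul, Real.norm_eq_abs, abs_of_pos hγ]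
    ring
  nlinarith [norm_nonneg (p + γ•θ - proj (p + γ•θ)), mul_nonneg hγ.le (norm_nonneg θ)]

/-- monotonicity: adding γ•c with c ∈ "primal cone direction" (⟨r,c⟩ ≥ 0 ∀ r ∈ K beneficiaries)
 Here we only need: for all r ∈ K, 0 ≤ ⟪r, c⟫. -/
lemma lemC (hmem : ∀ x, proj x ∈ K) (hchar : ∀ x, ∀ q ∈ K, ⟪q - proj x, x - proj x⟫ ≤ 0)
    (h0 : (0:E) ∈ K) (hsmul : ∀ c : ℝ, 0 ≤ c → ∀ p ∈ K, c • p ∈ K)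
    (hγ : 0 < γ) (x c : E) (hc : ∀ r ∈ K, 0 ≤ ⟪r, c⟫) :
    ‖proj x‖ ≤ ‖proj (x + γ • c)‖ := by
  have h1 : ‖proj x‖^2 = ⟪proj x, x⟫ := proj_normsq hmem hchar h0 hsmul x
  have h2 : ⟪proj x, x⟫ = ⟪proj x, x + γ•c⟫ - γ*⟪proj x, c⟫ := by
    rw [inner_add_right, real_inner_smul_right]; ring
  have h3 : 0 ≤ ⟪proj x, c⟫ := hc _ (hmem x)
  have h4 : ⟪proj x, x + γ•c⟫ ≤ ⟪proj x, proj (x + γ•c)⟫ := by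
    have hch := hchar (x + γ•c) (proj x) (hmem x)
    have hbsq := proj_normsq hmem hchar h0 hsmul (x + γ•c)
    have e : ⟪proj x - proj (x + γ•c), (x + γ•c) - proj (x + γ•c)⟫ =
        ⟪proj x, x + γ•c⟫ - ⟪proj x, proj (x + γ•c)⟫ - ⟪proj (x + γ•c), x + γ•c⟫
          + ⟪proj (x + γ•c), proj (x + γ•c)⟫ := by
      rw [inner_sub_left, inner_sub_right, inner_sub_right, real_inner_comm (proj (x+γ•c)) (proj x)]
      ring
    have e2 : ⟪proj (x + γ•c), proj (x + γ•c)⟫ = ‖proj (x + γ•c)‖^2 :=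
      real_inner_self_eq_norm_sq _
    linarith
  have h5 := real_inner_le_norm (proj x) (proj (x + γ•c))
  exact keyle_aux' (norm_nonneg _) (norm_nonneg _) (by nlinarith [mul_nonneg hγ.le h3])

/-- exact identity for the augmented term. -/
lemma lemD (hmem : ∀ x, proj x ∈ K) (hchar : ∀ x, ∀ q ∈ K, ⟪q - proj x, x - proj x⟫ ≤ 0)
    (h0 : (0:E) ∈ K) (hsmul : ∀ c : ℝ, 0 ≤ c → ∀ p ∈ K, c • p ∈ K)
    (hγ : 0 < γ) (p θ : E) :
    ‖proj (p + γ•θ)‖^2 - ‖p‖^2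
      = 2*γ*⟪proj (p + γ•θ), θ⟫ - ‖proj (p + γ•θ) - p‖^2 := by
  have h1 : ‖proj (p + γ•θ)‖^2 = ⟪proj (p + γ•θ), p⟫ + γ*⟪proj (p + γ•θ), θ⟫ := by
    rw [proj_normsq hmem hchar h0 hsmul, inner_add_right, real_inner_smul_right]
  have h2 : ‖proj (p + γ•θ) - p‖^2
      = ‖proj (p + γ•θ)‖^2 - 2*⟪proj (p + γ•θ), p⟫ + ‖p‖^2 := by
    rw [norm_sub_sq_real]
  linarith

end Aux2

set_option maxHeartbeats 1000000 in
/-- Theorem 2.3(iv): `L` and `L_γ` have the same saddle points. For `(u*, p*) ∈ U × C*`,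
`(u*,p*)` is a saddle point of `L` on `U × C*` iff it is a saddle point of `L_γ` on
`U × ℝ^m`; moreover every saddle point of `L_γ` on `U × ℝ^m` has its multiplier in `C*`. -/
theorem saddle_points_L_eq_saddle_points_Lgamma {n m : ℕ}
    (U : Set (EuclideanSpace ℝ (Fin n)))
    (hU_ne : U.Nonempty) (hU_closed : IsClosed U) (hU_convex : Convex ℝ U)
    (C : Set (EuclideanSpace ℝ (Fin m)))
    (hC_ne : C.Nonempty) (hC_closed : IsClosed C) (hC_convex : Convex ℝ C)
    (hC_cone : ∀ a b : ℝ, 0 ≤ a → 0 ≤ b → ∀ x ∈ C, ∀ y ∈ C, a • x + b • y ∈ C)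
    (Cstar : Set (EuclideanSpace ℝ (Fin m)))
    (hCstar : Cstar = {p : EuclideanSpace ℝ (Fin m) | ∀ x ∈ C, 0 ≤ ⟪p, x⟫})
    (proj : EuclideanSpace ℝ (Fin m) → EuclideanSpace ℝ (Fin m))
    (hproj_mem : ∀ x, proj x ∈ Cstar)
    (hproj_char : ∀ x, ∀ q ∈ Cstar, ⟪q - proj x, x - proj x⟫ ≤ 0)
    (G : EuclideanSpace ℝ (Fin n) → ℝ)
    (G' : EuclideanSpace ℝ (Fin n) → EuclideanSpace ℝ (Fin n))
    (hG_grad : ∀ x, HasGradientAt G (G' x) x)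
    (hG_convex : ConvexOn ℝ Set.univ G)
    (J : EuclideanSpace ℝ (Fin n) → ℝ)
    (hJ_convex : ConvexOn ℝ Set.univ J) (hJ_lsc : LowerSemicontinuous J)
    (Θ : EuclideanSpace ℝ (Fin n) → EuclideanSpace ℝ (Fin m))
    (hΘ_Cconvex : ∀ u v : EuclideanSpace ℝ (Fin n), ∀ α : ℝ, α ∈ Set.Icc (0:ℝ) 1 →
      -(Θ (α • u + (1 - α) • v) - α • Θ u - (1 - α) • Θ v) ∈ C)
    (L : EuclideanSpace ℝ (Fin n) → EuclideanSpace ℝ (Fin m) → ℝ)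
    (hL : ∀ u p, L u p = G u + J u + ⟪p, Θ u⟫)
    (γ : ℝ) (hγ : 0 < γ)
    (Lγ : EuclideanSpace ℝ (Fin n) → EuclideanSpace ℝ (Fin m) → ℝ)
    (hLγ : ∀ u p, Lγ u p =
      G u + J u + (‖proj (p + γ • Θ u)‖ ^ 2 - ‖p‖ ^ 2) / (2 * γ)) :
    (∀ ustar ∈ U, ∀ pstar ∈ Cstar,
      (((∀ p ∈ Cstar, L ustar p ≤ L ustar pstar) ∧ (∀ u ∈ U, L ustar pstar ≤ L u pstar)) ↔
        ((∀ p : EuclideanSpace ℝ (Fin m), Lγ ustar p ≤ Lγ ustar pstar) ∧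
          (∀ u ∈ U, Lγ ustar pstar ≤ Lγ u pstar)))) ∧
    (∀ ustar ∈ U, ∀ pstar : EuclideanSpace ℝ (Fin m),
      ((∀ p : EuclideanSpace ℝ (Fin m), Lγ ustar p ≤ Lγ ustar pstar) ∧
        (∀ u ∈ U, Lγ ustar pstar ≤ Lγ u pstar)) → pstar ∈ Cstar) := by
  have h2γ : (0:ℝ) < 2*γ := by linarith
  have hmemK : ∀ p, p ∈ Cstar ↔ ∀ x ∈ C, 0 ≤ ⟪p, x⟫ := by
    intro p; rw [hCstar]; exact Iff.rfl
  have hK0 : (0 : EuclideanSpace ℝ (Fin m)) ∈ Cstar := by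
    rw [hmemK]; intro x hx; simp
  have hKsmul : ∀ c : ℝ, 0 ≤ c → ∀ p ∈ Cstar, c • p ∈ Cstar := by
    intro c hc p hp
    rw [hmemK] at hp ⊢
    intro x hx
    rw [real_inner_smul_left]
    exact mul_nonneg hc (hp x hx)
  -- abbreviations of aux lemmas
  have Horth := proj_orth_s7 hproj_mem hproj_char hK0 hKsmul
  have Husq := proj_normsq hproj_mem hproj_char hK0 hKsmul
  have Huniq := proj_uniq hproj_mem hproj_char
  have Hnear := proj_nearest hproj_mem hproj_char
  have Hpyth := proj_pyth hproj_mem hproj_char hK0 hKsmul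
  have HA := lemA hproj_mem hproj_char hK0 hKsmul hγ
  have HB := lemB hproj_mem hproj_char hK0 hKsmul hγ
  have HC := lemC hproj_mem hproj_char hK0 hKsmul hγ
  have HD := lemD hproj_mem hproj_char hK0 hKsmul hγ
  have Hid : ∀ q ∈ Cstar, proj q = q := by
    intro q hq
    apply Huniq q q hq
    intro r hr; simp
  -- key fact: pstar ∈ Cstar from the p-maximality of Lγ
  have BWD1 : ∀ (ustar : EuclideanSpace ℝ (Fin n)) (pstar : EuclideanSpace ℝ (Fin m)),
      (∀ p, Lγ ustar p ≤ Lγ ustar pstar) → pstar ∈ Cstar := by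
    intro ustar pstar h1
    have key := h1 (proj pstar)
    rw [hLγ, hLγ] at key
    have key' : ‖proj (proj pstar + γ • Θ ustar)‖^2 - ‖proj pstar‖^2 ≤
        ‖proj (pstar + γ • Θ ustar)‖^2 - ‖pstar‖^2 := by
      have hd : (‖proj (proj pstar + γ • Θ ustar)‖^2 - ‖proj pstar‖^2)/(2*γ) ≤
          (‖proj (pstar + γ • Θ ustar)‖^2 - ‖pstar‖^2)/(2*γ) := by linarith
      have := mul_le_mul_of_nonneg_right hd h2γ.le
      rw [div_mul_cancel₀ _ (ne_of_gt h2γ), div_mul_cancel₀ _ (ne_of_gt h2γ)] at this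
      exact this
    -- monotonicity: ‖proj (pstar + γθ)‖ ≤ ‖proj (proj pstar + γθ)‖
    have hq := hproj_mem (pstar + γ • Θ ustar)
    have monot : ‖proj (pstar + γ • Θ ustar)‖ ≤ ‖proj (proj pstar + γ • Θ ustar)‖ := by
      have h1' : ‖proj (pstar + γ • Θ ustar)‖^2 = ⟪proj (pstar + γ • Θ ustar), pstar + γ • Θ ustar⟫ :=
        Husq _
      have h2' : ⟪proj (pstar + γ • Θ ustar), pstar - proj pstar⟫ ≤ 0 := by
        have hc := hproj_char pstar _ hq
        have ho := Horth pstar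
        rw [inner_sub_left] at hc
        linarith
      have h3' : ⟪proj (pstar + γ • Θ ustar), pstar + γ • Θ ustar⟫ =
          ⟪proj (pstar + γ • Θ ustar), proj pstar + γ • Θ ustar⟫ +
            ⟪proj (pstar + γ • Θ ustar), pstar - proj pstar⟫ := by
        rw [← inner_add_right]
        congr 1
        abel
      have h4' : ⟪proj (pstar + γ • Θ ustar), proj pstar + γ • Θ ustar⟫ ≤
          ⟪proj (pstar + γ • Θ ustar), proj (proj pstar + γ • Θ ustar)⟫ := by
        have hch := hproj_char (proj pstar + γ • Θ ustar) _ hq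
        have hbsq := Husq (proj pstar + γ • Θ ustar)
        rw [inner_sub_left, inner_sub_right, inner_sub_right] at hch
        have e2 : ⟪proj (proj pstar + γ • Θ ustar), proj (proj pstar + γ • Θ ustar)⟫ =
            ‖proj (proj pstar + γ • Θ ustar)‖^2 := real_inner_self_eq_norm_sq _
        linarith
      have h5' := real_inner_le_norm (proj (pstar + γ • Θ ustar)) (proj (proj pstar + γ • Θ ustar))
      exact keyle_aux' (norm_nonneg _) (norm_nonneg _) (by nlinarith)
    have hpr : ‖pstar‖^2 = ‖proj pstar‖^2 + ‖pstar - proj pstar‖^2 := Hpyth pstar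
    have hsub : ‖pstar - proj pstar‖^2 ≤ 0 := by
      nlinarith [monot, norm_nonneg (proj (pstar + γ • Θ ustar)),
        norm_nonneg (proj (proj pstar + γ • Θ ustar))]
    have hzero : ‖pstar - proj pstar‖ = 0 := by
      nlinarith [norm_nonneg (pstar - proj pstar)]
    have : pstar = proj pstar := sub_eq_zero.mp (norm_eq_zero.mp hzero)
    rw [this]
    exact hproj_mem pstar
  -- key fact: proj (pstar + γ • Θ ustar) = pstar from p-maximality, given pstar ∈ Cstar
  have BWDproj : ∀ (ustar : EuclideanSpace ℝ (Fin n)) (pstar : EuclideanSpace ℝ (Fin m)),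
      pstar ∈ Cstar → (∀ p, Lγ ustar p ≤ Lγ ustar pstar) →
      proj (pstar + γ • Θ ustar) = pstar := by
    intro ustar pstar hps h1
    by_cases hθ0 : Θ ustar = 0
    · rw [hθ0, smul_zero, add_zero]
      exact Hid pstar hps
    · have hθpos : (0:ℝ) < ‖Θ ustar‖ := norm_pos_iff.mpr hθ0
      have hql : ∀ t : ℝ, 0 < t →
          2*t*γ*‖Θ ustar‖^2 ≤
            2*t*‖Θ ustar‖*‖pstar + γ • Θ ustar - proj (pstar + γ • Θ ustar)‖
              + t^2*‖Θ ustar‖^2 := by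
        intro t ht
        have key := h1 (pstar + t • Θ ustar)
        rw [hLγ, hLγ] at key
        have key' : ‖proj (pstar + t • Θ ustar + γ • Θ ustar)‖^2 - ‖pstar + t • Θ ustar‖^2 ≤
            ‖proj (pstar + γ • Θ ustar)‖^2 - ‖pstar‖^2 := by
          have hd : (‖proj (pstar + t • Θ ustar + γ • Θ ustar)‖^2 - ‖pstar + t • Θ ustar‖^2)/(2*γ) ≤
              (‖proj (pstar + γ • Θ ustar)‖^2 - ‖pstar‖^2)/(2*γ) := by linarith
          have := mul_le_mul_of_nonneg_right hd h2γ.le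
          rw [div_mul_cancel₀ _ (ne_of_gt h2γ), div_mul_cancel₀ _ (ne_of_gt h2γ)] at this
          exact this
        have htθ : ‖t • Θ ustar‖^2 = t^2*‖Θ ustar‖^2 := by
          rw [norm_smul, Real.norm_eq_abs, mul_pow, sq_abs]
        have e1 : ‖pstar + t • Θ ustar + γ • Θ ustar‖^2 =
            ‖pstar + γ • Θ ustar‖^2 + 2*t*⟪pstar + γ • Θ ustar, Θ ustar⟫ + t^2*‖Θ ustar‖^2 := by
          have er : pstar + t • Θ ustar + γ • Θ ustar = (pstar + γ • Θ ustar) + t • Θ ustar := by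
            abel
          rw [er, norm_add_sq_real, real_inner_smul_right, htθ]
          ring
        have e2 : ‖pstar + t • Θ ustar‖^2 = ‖pstar‖^2 + 2*t*⟪pstar, Θ ustar⟫ + t^2*‖Θ ustar‖^2 := by
          rw [norm_add_sq_real, real_inner_smul_right, htθ]
          ring
        have e3 : ⟪pstar + γ • Θ ustar, Θ ustar⟫ = ⟪pstar, Θ ustar⟫ + γ*‖Θ ustar‖^2 := by
          rw [inner_add_left, real_inner_smul_left, real_inner_self_eq_norm_sq]
        have hpy1 := Hpyth (pstar + t • Θ ustar + γ • Θ ustar)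
        have hpy2 := Hpyth (pstar + γ • Θ ustar)
        have hnear := Hnear (pstar + t • Θ ustar + γ • Θ ustar)
          (proj (pstar + γ • Θ ustar)) (hproj_mem (pstar + γ • Θ ustar))
        have edec : pstar + t • Θ ustar + γ • Θ ustar - proj (pstar + γ • Θ ustar) =
            (pstar + γ • Θ ustar - proj (pstar + γ • Θ ustar)) + t • Θ ustar := by
          abel
        have htri : ‖pstar + t • Θ ustar + γ • Θ ustar - proj (pstar + γ • Θ ustar)‖ ≤
            ‖pstar + γ • Θ ustar - proj (pstar + γ • Θ ustar)‖ + t*‖Θ ustar‖ := by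
          rw [edec]
          have := norm_add_le (pstar + γ • Θ ustar - proj (pstar + γ • Θ ustar)) (t • Θ ustar)
          rw [norm_smul, Real.norm_eq_abs, abs_of_pos ht] at this
          exact this
        have hsq : ‖pstar + t • Θ ustar + γ • Θ ustar -
              proj (pstar + t • Θ ustar + γ • Θ ustar)‖^2 ≤
            (‖pstar + γ • Θ ustar - proj (pstar + γ • Θ ustar)‖ + t*‖Θ ustar‖)^2 :=
          pow_le_pow_left₀ (norm_nonneg _) (le_trans hnear htri) 2
        nlinarith [key', e1, e2, e3, hpy1, hpy2, hsq]
      have h2 : 2*γ*‖Θ ustar‖^2 ≤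
          2*‖Θ ustar‖*‖pstar + γ • Θ ustar - proj (pstar + γ • Θ ustar)‖ := by
        apply le_of_forall_pos_le_add
        intro ε hε
        have hM2 : (0:ℝ) < ‖Θ ustar‖^2 := by positivity
        have ht : (0:ℝ) < ε/‖Θ ustar‖^2 := by positivity
        have := hql (ε/‖Θ ustar‖^2) ht
        have hcancel : (ε/‖Θ ustar‖^2)*‖Θ ustar‖^2 = ε := div_mul_cancel₀ _ (ne_of_gt hM2)
        nlinarith [this, ht]
      have hmain : γ*‖Θ ustar‖ ≤ ‖pstar + γ • Θ ustar - proj (pstar + γ • Θ ustar)‖ := by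
        nlinarith [h2, hθpos]
      have hD2 : ‖pstar + γ • Θ ustar - proj (pstar + γ • Θ ustar)‖ ≤ γ*‖Θ ustar‖ := by
        have := Hnear (pstar + γ • Θ ustar) pstar hps
        have e : pstar + γ • Θ ustar - pstar = γ • Θ ustar := by abel
        rw [e, norm_smul, Real.norm_eq_abs, abs_of_pos hγ] at this
        exact this
      have heq : ‖pstar + γ • Θ ustar - proj (pstar + γ • Θ ustar)‖ = γ*‖Θ ustar‖ :=
        le_antisymm hD2 hmain
      have hch := hproj_char (pstar + γ • Θ ustar) pstar hps
      have edec2 : pstar + γ • Θ ustar - pstar =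
          (pstar + γ • Θ ustar - proj (pstar + γ • Θ ustar)) +
            (proj (pstar + γ • Θ ustar) - pstar) := by abel
      have hexp : ‖pstar + γ • Θ ustar - pstar‖^2 =
          ‖pstar + γ • Θ ustar - proj (pstar + γ • Θ ustar)‖^2
          + 2*⟪pstar + γ • Θ ustar - proj (pstar + γ • Θ ustar),
              proj (pstar + γ • Θ ustar) - pstar⟫
          + ‖proj (pstar + γ • Θ ustar) - pstar‖^2 := by
        rw [edec2, norm_add_sq_real]
      have hinner : ⟪pstar + γ • Θ ustar - proj (pstar + γ • Θ ustar),
          proj (pstar + γ • Θ ustar) - pstar⟫ =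
          -⟪pstar - proj (pstar + γ • Θ ustar),
            pstar + γ • Θ ustar - proj (pstar + γ • Θ ustar)⟫ := by
        rw [real_inner_comm]
        have e : proj (pstar + γ • Θ ustar) - pstar = -(pstar - proj (pstar + γ • Θ ustar)) := by
          abel
        rw [e, inner_neg_left]
      have enorm : ‖pstar + γ • Θ ustar - pstar‖ = γ*‖Θ ustar‖ := by
        have e : pstar + γ • Θ ustar - pstar = γ • Θ ustar := by abel
        rw [e, norm_smul, Real.norm_eq_abs, abs_of_pos hγ]
      have heq2 : ‖pstar + γ • Θ ustar - proj (pstar + γ • Θ ustar)‖^2 = (γ*‖Θ ustar‖)^2 := by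
        rw [heq]
      have enorm2 : ‖pstar + γ • Θ ustar - pstar‖^2 = (γ*‖Θ ustar‖)^2 := by
        rw [enorm]
      have hfin : ‖proj (pstar + γ • Θ ustar) - pstar‖^2 ≤ 0 := by
        linarith [hexp, hinner, hch, heq2, enorm2]
      have : ‖proj (pstar + γ • Θ ustar) - pstar‖ = 0 := by
        nlinarith [norm_nonneg (proj (pstar + γ • Θ ustar) - pstar)]
      exact sub_eq_zero.mp (norm_eq_zero.mp this)
  -- forward direction
  have FWD : ∀ ustar ∈ U, ∀ pstar ∈ Cstar,
      ((∀ p ∈ Cstar, L ustar p ≤ L ustar pstar) ∧ (∀ u ∈ U, L ustar pstar ≤ L u pstar)) →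
      ((∀ p, Lγ ustar p ≤ Lγ ustar pstar) ∧ (∀ u ∈ U, Lγ ustar pstar ≤ Lγ u pstar)) := by
    intro ustar hus pstar hps hsad
    obtain ⟨hp1, hp2⟩ := hsad
    have hle : ∀ p ∈ Cstar, ⟪p, Θ ustar⟫ ≤ ⟪pstar, Θ ustar⟫ := by
      intro p hp
      have := hp1 p hp
      rw [hL, hL] at this
      linarith
    have hz : ⟪pstar, Θ ustar⟫ = 0 := by
      have h0 := hle 0 hK0
      rw [inner_zero_left] at h0
      have h2 := hle ((2:ℝ) • pstar) (hKsmul 2 (by norm_num) pstar hps)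
      rw [real_inner_smul_left] at h2
      linarith
    have hpolar : ∀ r ∈ Cstar, ⟪r, Θ ustar⟫ ≤ 0 := by
      intro r hr
      have := hle r hr
      linarith
    have hprojw : proj (pstar + γ • Θ ustar) = pstar := by
      apply Huniq _ _ hps
      intro r hr
      have e : (pstar + γ • Θ ustar) - pstar = γ • Θ ustar := by abel
      rw [e, real_inner_smul_right, inner_sub_left, hz]
      have := hpolar r hr
      nlinarith
    have hLγstar : Lγ ustar pstar = G ustar + J ustar := by
      rw [hLγ, hprojw]; simp
    have hLLγ : L ustar pstar = Lγ ustar pstar := by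
      rw [hL, hLγstar, hz, add_zero]
    constructor
    · intro p
      rw [hLγ, hLγstar]
      have hA := HA p (Θ ustar) hpolar
      have hA2 : ‖proj (p + γ • Θ ustar)‖^2 ≤ ‖p‖^2 := by
        nlinarith [norm_nonneg (proj (p + γ • Θ ustar)), norm_nonneg p]
      have : (‖proj (p + γ • Θ ustar)‖^2 - ‖p‖^2) / (2*γ) ≤ 0 :=
        div_nonpos_of_nonpos_of_nonneg (by linarith) (by linarith)
      linarith
    · intro u hu
      have h1 := hp2 u hu
      have h2 : L u pstar ≤ Lγ u pstar := by
        rw [hL, hLγ]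
        have hB := HB pstar hps (Θ u)
        have : ⟪pstar, Θ u⟫ ≤ (‖proj (pstar + γ • Θ u)‖^2 - ‖pstar‖^2) / (2*γ) := by
          rw [le_div_iff₀ h2γ]; nlinarith
        linarith
      linarith [hLLγ]
  -- backward direction
  have BWD : ∀ ustar ∈ U, ∀ pstar ∈ Cstar,
      ((∀ p, Lγ ustar p ≤ Lγ ustar pstar) ∧ (∀ u ∈ U, Lγ ustar pstar ≤ Lγ u pstar)) →
      ((∀ p ∈ Cstar, L ustar p ≤ L ustar pstar) ∧ (∀ u ∈ U, L ustar pstar ≤ L u pstar)) := by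
    intro ustar hus pstar hps hsad
    obtain ⟨h1γ, h2γ'⟩ := hsad
    have hprojw := BWDproj ustar pstar hps h1γ
    have hkey : ∀ r ∈ Cstar, ⟪r - pstar, Θ ustar⟫ ≤ 0 := by
      intro r hr
      have hc := hproj_char (pstar + γ • Θ ustar) r hr
      rw [hprojw] at hc
      have e : pstar + γ • Θ ustar - pstar = γ • Θ ustar := by abel
      rw [e, real_inner_smul_right] at hc
      nlinarith
    have hz : ⟪pstar, Θ ustar⟫ = 0 := by
      have h0 := hkey 0 hK0
      have e0 : (0:EuclideanSpace ℝ (Fin m)) - pstar = -pstar := by abel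
      rw [e0, inner_neg_left] at h0
      have h2 := hkey ((2:ℝ) • pstar) (hKsmul 2 (by norm_num) pstar hps)
      have e2 : ((2:ℝ) • pstar - pstar) = pstar := by module
      rw [e2] at h2
      linarith
    have hpolar : ∀ r ∈ Cstar, ⟪r, Θ ustar⟫ ≤ 0 := by
      intro r hr
      have := hkey r hr
      rw [inner_sub_left, hz] at this
      linarith
    have hLγstar : Lγ ustar pstar = G ustar + J ustar := by
      rw [hLγ, hprojw]; simp
    constructor
    · intro p hp
      rw [hL, hL, hz]
      have := hpolar p hp
      linarith
    · intro u hu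
      have hstep : ∀ α : ℝ, 0 < α → α ≤ 1 →
          G ustar + J ustar ≤ G u + J u + ⟪pstar, Θ u⟫ + γ*α*‖Θ u - Θ ustar‖^2/2 := by
        intro α hα0 hα1
        have hUα : α • u + (1-α) • ustar ∈ U :=
          hU_convex hu hus hα0.le (by linarith) (by ring)
        have hmono := HC (pstar + γ • Θ (α • u + (1-α) • ustar))
            (-(Θ (α • u + (1-α) • ustar) - α • Θ u - (1-α) • Θ ustar))
            (by
              intro r hr
              rw [hmemK] at hr
              exact hr _ (hΘ_Cconvex u ustar α ⟨hα0.le, hα1⟩))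
        have earg : (pstar + γ • Θ (α • u + (1-α) • ustar)) +
            γ • (-(Θ (α • u + (1-α) • ustar) - α • Θ u - (1-α) • Θ ustar)) =
            pstar + γ • (α • Θ u + (1-α) • Θ ustar) := by
          module
        rw [earg] at hmono
        have hid := HD pstar (α • Θ u + (1-α) • Θ ustar)
        have hbK := hproj_mem (pstar + γ • (α • Θ u + (1-α) • Θ ustar))
        have hb1 : ⟪proj (pstar + γ • (α • Θ u + (1-α) • Θ ustar)), Θ ustar⟫ ≤ 0 :=
          hpolar _ hbK
        have hb2 : ⟪proj (pstar + γ • (α • Θ u + (1-α) • Θ ustar)) - pstar, Θ u - Θ ustar⟫ ≤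
            ‖proj (pstar + γ • (α • Θ u + (1-α) • Θ ustar)) - pstar‖ * ‖Θ u - Θ ustar‖ :=
          real_inner_le_norm _ _
        have hb3 : ⟪proj (pstar + γ • (α • Θ u + (1-α) • Θ ustar)), α • Θ u + (1-α) • Θ ustar⟫ =
            ⟪proj (pstar + γ • (α • Θ u + (1-α) • Θ ustar)), Θ ustar⟫
            + α*⟪pstar, Θ u⟫ - α*⟪pstar, Θ ustar⟫
            + α*⟪proj (pstar + γ • (α • Θ u + (1-α) • Θ ustar)) - pstar, Θ u - Θ ustar⟫ := by
          rw [inner_add_right, real_inner_smul_right, real_inner_smul_right,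
            inner_sub_left, inner_sub_right, inner_sub_right]
          ring
        have hnum : ‖proj (pstar + γ • (α • Θ u + (1-α) • Θ ustar))‖^2 - ‖pstar‖^2 ≤
            2*γ*(α*⟪pstar, Θ u⟫) + γ^2*α^2*‖Θ u - Θ ustar‖^2 := by
          rw [hz, mul_zero, sub_zero] at hb3
          have hscale : α*⟪proj (pstar + γ • (α • Θ u + (1-α) • Θ ustar)) - pstar, Θ u - Θ ustar⟫ ≤
              α*(‖proj (pstar + γ • (α • Θ u + (1-α) • Θ ustar)) - pstar‖ * ‖Θ u - Θ ustar‖) :=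
            mul_le_mul_of_nonneg_left hb2 hα0.le
          have hb3' : 2*γ*⟪proj (pstar + γ • (α • Θ u + (1-α) • Θ ustar)),
                α • Θ u + (1-α) • Θ ustar⟫ =
              2*γ*⟪proj (pstar + γ • (α • Θ u + (1-α) • Θ ustar)), Θ ustar⟫
              + 2*γ*(α*⟪pstar, Θ u⟫)
              + 2*γ*(α*⟪proj (pstar + γ • (α • Θ u + (1-α) • Θ ustar)) - pstar,
                  Θ u - Θ ustar⟫) := by
            rw [hb3]; ring
          have t1 : 2*γ*⟪proj (pstar + γ • (α • Θ u + (1-α) • Θ ustar)), Θ ustar⟫ ≤ 0 :=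
            mul_nonpos_of_nonneg_of_nonpos (by linarith) hb1
          have t2 : 2*γ*(α*⟪proj (pstar + γ • (α • Θ u + (1-α) • Θ ustar)) - pstar,
                Θ u - Θ ustar⟫) ≤
              2*γ*(α*(‖proj (pstar + γ • (α • Θ u + (1-α) • Θ ustar)) - pstar‖
                * ‖Θ u - Θ ustar‖)) :=
            mul_le_mul_of_nonneg_left hscale h2γ.le
          have t3 : 2*γ*(α*(‖proj (pstar + γ • (α • Θ u + (1-α) • Θ ustar)) - pstar‖
                * ‖Θ u - Θ ustar‖)) ≤
              ‖proj (pstar + γ • (α • Θ u + (1-α) • Θ ustar)) - pstar‖^2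
                + γ^2*α^2*‖Θ u - Θ ustar‖^2 := by
            nlinarith [sq_nonneg (‖proj (pstar + γ • (α • Θ u + (1-α) • Θ ustar)) - pstar‖
              - γ*α*‖Θ u - Θ ustar‖)]
          linarith [hid, hb3', t1, t2, t3]
        have key := h2γ' (α • u + (1-α) • ustar) hUα
        rw [hLγstar, hLγ] at key
        have hmono2 : ‖proj (pstar + γ • Θ (α • u + (1-α) • ustar))‖^2 ≤
            ‖proj (pstar + γ • (α • Θ u + (1-α) • Θ ustar))‖^2 :=
          pow_le_pow_left₀ (norm_nonneg _) hmono 2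
        have hdivb : (‖proj (pstar + γ • Θ (α • u + (1-α) • ustar))‖^2 - ‖pstar‖^2)/(2*γ) ≤
            α*⟪pstar, Θ u⟫ + γ*α^2*‖Θ u - Θ ustar‖^2/2 := by
          rw [div_le_iff₀ h2γ]
          nlinarith [hmono2, hnum]
        have hg := hG_convex.2 (Set.mem_univ u) (Set.mem_univ ustar) hα0.le
          (by linarith : (0:ℝ) ≤ 1 - α) (by ring)
        have hj := hJ_convex.2 (Set.mem_univ u) (Set.mem_univ ustar) hα0.le
          (by linarith : (0:ℝ) ≤ 1 - α) (by ring)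
        simp only [smul_eq_mul] at hg hj
        nlinarith [key, hdivb, hg, hj, hα0]
      apply le_of_forall_pos_le_add
      intro ε hε
      have hden : (0:ℝ) < γ*(‖Θ u - Θ ustar‖^2+1) := by positivity
      have hα0 : (0:ℝ) < min 1 (2*ε/(γ*(‖Θ u - Θ ustar‖^2+1))) :=
        lt_min one_pos (by positivity)
      have hα1 : min 1 (2*ε/(γ*(‖Θ u - Θ ustar‖^2+1))) ≤ 1 := min_le_left _ _
      have hs := hstep _ hα0 hα1
      have hb : min 1 (2*ε/(γ*(‖Θ u - Θ ustar‖^2+1))) ≤ 2*ε/(γ*(‖Θ u - Θ ustar‖^2+1)) :=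
        min_le_right _ _
      have hb' : min 1 (2*ε/(γ*(‖Θ u - Θ ustar‖^2+1))) * (γ*(‖Θ u - Θ ustar‖^2+1)) ≤ 2*ε := by
        rw [← le_div_iff₀ hden]
        exact hb
      have herr : γ*(min 1 (2*ε/(γ*(‖Θ u - Θ ustar‖^2+1))))*‖Θ u - Θ ustar‖^2/2 ≤ ε := by
        nlinarith [hb', hα0, hγ, sq_nonneg ‖Θ u - Θ ustar‖]
      rw [hL, hL, hz]
      linarith [hs, herr]
  exact ⟨fun ustar hu pstar hp => ⟨FWD ustar hu pstar hp, BWD ustar hu pstar hp⟩,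
    fun ustar hu pstar h => BWD1 ustar pstar h.1⟩
end Aux
end

section
/- The augmented Lagrangian is stable in u: if (u*, p*) ∈ U × C* is a saddle point of L on U × C*, then the set of minimizers {u ∈ U : L_γ(u, p*) ≤ L_γ(v, p*) for all v ∈ U} equals the set U* of optimal solutions of the primal problem (P), i.e. the set of u ∈ U with Θ(u) ∈ −C and G(u)+J(u) ≤ G(v)+J(v) for every v ∈ U with Θ(v) ∈ −C. -/
open RealInnerProductSpace

/-- Theorem 2.3(v) (stability of the augmented Lagrangian in `u`): if `(u*, p*)` is a
saddle point of `L` on `U × C*`, then the minimizers of `L_γ(·, p*)` over `U` are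
exactly the optimal solutions of the primal problem (P). -/
theorem augmented_lagrangian_stable {n m : ℕ}
    (U : Set (EuclideanSpace ℝ (Fin n)))
    (hU_ne : U.Nonempty) (hU_closed : IsClosed U) (hU_convex : Convex ℝ U)
    (C : Set (EuclideanSpace ℝ (Fin m)))
    (hC_ne : C.Nonempty) (hC_closed : IsClosed C) (hC_convex : Convex ℝ C)
    (hC_cone : ∀ a b : ℝ, 0 ≤ a → 0 ≤ b → ∀ x ∈ C, ∀ y ∈ C, a • x + b • y ∈ C)
    (Cstar : Set (EuclideanSpace ℝ (Fin m)))
    (hCstar : Cstar = {p : EuclideanSpace ℝ (Fin m) | ∀ x ∈ C, 0 ≤ ⟪p, x⟫})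
    (proj : EuclideanSpace ℝ (Fin m) → EuclideanSpace ℝ (Fin m))
    (hproj_mem : ∀ x, proj x ∈ Cstar)
    (hproj_char : ∀ x, ∀ q ∈ Cstar, ⟪q - proj x, x - proj x⟫ ≤ 0)
    (G : EuclideanSpace ℝ (Fin n) → ℝ)
    (G' : EuclideanSpace ℝ (Fin n) → EuclideanSpace ℝ (Fin n))
    (hG_grad : ∀ x, HasGradientAt G (G' x) x)
    (hG_convex : ConvexOn ℝ Set.univ G)
    (J : EuclideanSpace ℝ (Fin n) → ℝ)
    (hJ_convex : ConvexOn ℝ Set.univ J) (hJ_lsc : LowerSemicontinuous J)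
    (hcoercive : ∀ u : ℕ → EuclideanSpace ℝ (Fin n), (∀ k, u k ∈ U) →
      Filter.Tendsto (fun k => ‖u k‖) Filter.atTop Filter.atTop →
      Filter.Tendsto (fun k => G (u k) + J (u k)) Filter.atTop Filter.atTop)
    (Θ : EuclideanSpace ℝ (Fin n) → EuclideanSpace ℝ (Fin m))
    (hΘ_Cconvex : ∀ u v : EuclideanSpace ℝ (Fin n), ∀ α : ℝ, α ∈ Set.Icc (0:ℝ) 1 →
      -(Θ (α • u + (1 - α) • v) - α • Θ u - (1 - α) • Θ v) ∈ C)
    (L : EuclideanSpace ℝ (Fin n) → EuclideanSpace ℝ (Fin m) → ℝ)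
    (hL : ∀ u p, L u p = G u + J u + ⟪p, Θ u⟫)
    (γ : ℝ) (hγ : 0 < γ)
    (Lγ : EuclideanSpace ℝ (Fin n) → EuclideanSpace ℝ (Fin m) → ℝ)
    (hLγ : ∀ u p, Lγ u p =
      G u + J u + (‖proj (p + γ • Θ u)‖ ^ 2 - ‖p‖ ^ 2) / (2 * γ))
    (ustar : EuclideanSpace ℝ (Fin n)) (pstar : EuclideanSpace ℝ (Fin m))
    (hustar : ustar ∈ U) (hpstar : pstar ∈ Cstar)
    (hsaddle : (∀ p ∈ Cstar, L ustar p ≤ L ustar pstar) ∧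
      (∀ u ∈ U, L ustar pstar ≤ L u pstar)) :
    {u | u ∈ U ∧ ∀ v ∈ U, Lγ u pstar ≤ Lγ v pstar} =
      {u | u ∈ U ∧ -Θ u ∈ C ∧
        ∀ v ∈ U, -Θ v ∈ C → G u + J u ≤ G v + J v} := by

  obtain ⟨hs1, hs2⟩ := hsaddle
  -- basic cone facts
  have h0C : (0 : EuclideanSpace ℝ (Fin m)) ∈ C := by
    obtain ⟨x, hx⟩ := hC_ne
    simpa using hC_cone 0 0 le_rfl le_rfl x hx x hx
  have hCsmul : ∀ t : ℝ, 0 ≤ t → ∀ z ∈ C, t • z ∈ C := by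
    intro t ht z hz
    simpa using hC_cone t 0 ht le_rfl z hz z hz
  have h0Cstar : (0 : EuclideanSpace ℝ (Fin m)) ∈ Cstar := by
    rw [hCstar]; intro x hx; simp
  have hCstarsmul : ∀ t : ℝ, 0 ≤ t → ∀ p ∈ Cstar, t • p ∈ Cstar := by
    simp only [hCstar, Set.mem_setOf_eq]
    intro t ht p hp x hx
    rw [real_inner_smul_left]
    exact mul_nonneg ht (hp x hx)
  have hpstar' : ∀ x ∈ C, 0 ≤ ⟪pstar, x⟫ := by rw [hCstar] at hpstar; exact hpstar
  -- Moreau decomposition fact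
  have hmoreau : ∀ x, ⟪proj x, x - proj x⟫ = 0 := by
    intro x
    have h1 := hproj_char x 0 h0Cstar
    have h2 := hproj_char x ((2:ℝ) • proj x)
      (hCstarsmul 2 (by norm_num) _ (hproj_mem x))
    rw [zero_sub, inner_neg_left] at h1
    have e : (2:ℝ) • proj x - proj x = proj x := by module
    rw [e] at h2
    linarith
  -- bipolar theorem
  have hbipolar : ∀ y : EuclideanSpace ℝ (Fin m),
      (∀ p ∈ Cstar, 0 ≤ ⟪p, y⟫) → y ∈ C := by
    intro y hy
    obtain ⟨z, hzC, hz⟩ :=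
      exists_norm_eq_iInf_of_complete_convex hC_ne hC_closed.isComplete hC_convex y
    rw [norm_eq_iInf_iff_real_inner_le_zero hC_convex hzC] at hz
    have h1 := hz 0 h0C
    have h2 := hz ((2:ℝ) • z) (hCsmul 2 (by norm_num) z hzC)
    rw [zero_sub, inner_neg_right] at h1
    have e : (2:ℝ) • z - z = z := by module
    rw [e] at h2
    have hz0 : ⟪y - z, z⟫ = 0 := by linarith
    have hmem : z - y ∈ Cstar := by
      rw [hCstar]; intro w hw
      have hw1 := hz w hw
      rw [inner_sub_right] at hw1
      have e2 : z - y = -(y - z) := by abel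
      rw [e2, inner_neg_left]
      linarith
    have h3 := hy (z - y) hmem
    rw [show z - y = -(y - z) by abel, inner_neg_left] at h3
    have h4 : ⟪y - z, y - z⟫ ≤ 0 := by
      rw [inner_sub_right]
      linarith
    have h5 : ‖y - z‖ ^ 2 ≤ 0 := by
      rw [← real_inner_self_eq_norm_sq]; exact h4
    have h6 : y - z = 0 := by
      have := sq_nonneg ‖y - z‖
      have hn : ‖y - z‖ = 0 := by nlinarith
      exact norm_eq_zero.mp hn
    have : y = z := by
      have := sub_eq_zero.mp h6
      exact this
    rw [this]; exact hzC
  -- inner product expansion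
  have hx_inner : ∀ u : EuclideanSpace ℝ (Fin n),
      ⟪pstar, pstar + γ • Θ u⟫ = ‖pstar‖ ^ 2 + γ * ⟪pstar, Θ u⟫ := by
    intro u
    rw [inner_add_right, real_inner_smul_right, real_inner_self_eq_norm_sq]
  -- key inequality: ⟪p*, x⟫ ≤ ⟪p*, proj x⟫
  have key1 : ∀ u : EuclideanSpace ℝ (Fin n),
      ⟪pstar, pstar + γ • Θ u⟫ ≤ ⟪pstar, proj (pstar + γ • Θ u)⟫ := by
    intro u
    have h1 := hproj_char (pstar + γ • Θ u) pstar hpstar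
    have h2 := hmoreau (pstar + γ • Θ u)
    rw [inner_sub_left, h2, sub_zero, inner_sub_right] at h1
    linarith
  have F1 : ∀ u : EuclideanSpace ℝ (Fin n),
      2 * γ * ⟪pstar, Θ u⟫ + ‖pstar - proj (pstar + γ • Θ u)‖ ^ 2
        ≤ ‖proj (pstar + γ • Θ u)‖ ^ 2 - ‖pstar‖ ^ 2 := by
    intro u
    have h1 := key1 u
    rw [hx_inner u] at h1
    have h2 : ‖pstar - proj (pstar + γ • Θ u)‖ ^ 2
        = ‖pstar‖ ^ 2 - 2 * ⟪pstar, proj (pstar + γ • Θ u)⟫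
          + ‖proj (pstar + γ • Θ u)‖ ^ 2 := norm_sub_sq_real _ _
    linarith
  have F2 : ∀ u : EuclideanSpace ℝ (Fin n), -Θ u ∈ C →
      ‖proj (pstar + γ • Θ u)‖ ^ 2 ≤ ‖pstar‖ ^ 2 := by
    intro u hfeas
    have hwC : ∀ z ∈ C, 0 ≤ ⟪proj (pstar + γ • Θ u), z⟫ := by
      have := hproj_mem (pstar + γ • Θ u); rw [hCstar] at this; exact this
    have h1 : 0 ≤ ⟪proj (pstar + γ • Θ u), -Θ u⟫ := hwC _ hfeas
    rw [inner_neg_right] at h1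
    have h2 := hmoreau (pstar + γ • Θ u)
    rw [inner_sub_right, inner_add_right, real_inner_smul_right,
      real_inner_self_eq_norm_sq] at h2
    have h4 : ⟪proj (pstar + γ • Θ u), pstar⟫
        ≤ ‖proj (pstar + γ • Θ u)‖ * ‖pstar‖ := real_inner_le_norm _ _
    have h5 : γ * ⟪proj (pstar + γ • Θ u), Θ u⟫ ≤ 0 :=
      mul_nonpos_of_nonneg_of_nonpos hγ.le (by linarith)
    nlinarith [norm_nonneg (proj (pstar + γ • Θ u)), norm_nonneg pstar,
      sq_nonneg (‖proj (pstar + γ • Θ u)‖ - ‖pstar‖)]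
  -- complementarity ingredients
  have hd0 : 0 ≤ ⟪pstar, Θ ustar⟫ := by
    have h := hs1 0 h0Cstar
    rw [hL, hL] at h
    simp only [inner_zero_left] at h
    linarith
  have hfeas_star : -Θ ustar ∈ C := by
    apply hbipolar
    intro p hp
    rw [inner_neg_right, neg_nonneg]
    by_contra hcon
    push_neg at hcon
    have ht : (0:ℝ) ≤ (⟪pstar, Θ ustar⟫ + 1) / ⟪p, Θ ustar⟫ :=
      div_nonneg (by linarith) hcon.le
    have h := hs1 (((⟪pstar, Θ ustar⟫ + 1) / ⟪p, Θ ustar⟫) • p)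
      (hCstarsmul _ ht p hp)
    rw [hL, hL, real_inner_smul_left, div_mul_cancel₀ _ (ne_of_gt hcon)] at h
    linarith
  have hp_le : ⟪pstar, Θ ustar⟫ ≤ 0 := by
    have := hpstar' _ hfeas_star
    rw [inner_neg_right] at this; linarith
  have hp_perp : ⟪pstar, Θ ustar⟫ = 0 := le_antisymm hp_le hd0
  have hL_ge : ∀ u ∈ U, G ustar + J ustar ≤ G u + J u + ⟪pstar, Θ u⟫ := by
    intro u hu
    have h := hs2 u hu
    rw [hL, hL, hp_perp] at h
    linarith
  have hopt_star : ∀ v ∈ U, -Θ v ∈ C → G ustar + J ustar ≤ G v + J v := by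
    intro v hv hfv
    have h1 := hL_ge v hv
    have h2 : ⟪pstar, Θ v⟫ ≤ 0 := by
      have := hpstar' _ hfv; rw [inner_neg_right] at this; linarith
    linarith
  have h2γ : (0:ℝ) < 2 * γ := by linarith
  have hLγ_star : Lγ ustar pstar = G ustar + J ustar := by
    have hA := F1 ustar
    rw [hp_perp] at hA
    have hB := F2 ustar hfeas_star
    have hnn := sq_nonneg ‖pstar - proj (pstar + γ • Θ ustar)‖
    have hz : ‖proj (pstar + γ • Θ ustar)‖ ^ 2 - ‖pstar‖ ^ 2 = 0 := by linarith
    rw [hLγ, hz]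
    simp
  have hLγ_ge : ∀ u ∈ U,
      G ustar + J ustar + ‖pstar - proj (pstar + γ • Θ u)‖ ^ 2 / (2 * γ)
        ≤ Lγ u pstar := by
    intro u hu
    rw [hLγ]
    have h1 := F1 u
    have h2 := hL_ge u hu
    have key := (div_le_div_iff_of_pos_right h2γ).mpr h1
    rw [add_div] at key
    have e : 2 * γ * ⟪pstar, Θ u⟫ / (2 * γ) = ⟪pstar, Θ u⟫ := by
      field_simp
    rw [e] at key
    linarith
  -- the set equality
  ext u
  simp only [Set.mem_setOf_eq]
  constructor
  · rintro ⟨hu, hmin⟩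
    have hle : Lγ u pstar ≤ G ustar + J ustar := by
      rw [← hLγ_star]; exact hmin ustar hustar
    have hge := hLγ_ge u hu
    have hN := sq_nonneg ‖pstar - proj (pstar + γ • Θ u)‖
    have hN0 : ‖pstar - proj (pstar + γ • Θ u)‖ ^ 2 / (2 * γ) ≤ 0 := by linarith
    have hNz : ‖pstar - proj (pstar + γ • Θ u)‖ ^ 2 = 0 := by
      by_contra hcon
      have hNpos : 0 < ‖pstar - proj (pstar + γ • Θ u)‖ ^ 2 :=
        lt_of_le_of_ne hN (Ne.symm hcon)
      have := div_pos hNpos h2γ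
      linarith
    have hw : proj (pstar + γ • Θ u) = pstar := by
      have h1 : ‖pstar - proj (pstar + γ • Θ u)‖ = 0 :=
        (pow_eq_zero_iff two_ne_zero).mp hNz
      have h2 := norm_eq_zero.mp h1
      have := sub_eq_zero.mp h2
      exact this.symm
    have e : pstar + γ • Θ u - pstar = γ • Θ u := by abel
    have hperp : ⟪pstar, Θ u⟫ = 0 := by
      have hm := hmoreau (pstar + γ • Θ u)
      rw [hw, e, real_inner_smul_right] at hm
      rcases mul_eq_zero.mp hm with h | h
      · exact absurd h (ne_of_gt hγ)
      · exact h
    have hfeasu : -Θ u ∈ C := by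
      apply hbipolar
      intro p hp
      rw [inner_neg_right, neg_nonneg]
      have hc := hproj_char (pstar + γ • Θ u) p hp
      rw [hw, e, inner_sub_left, real_inner_smul_right, real_inner_smul_right,
        hperp] at hc
      nlinarith
    have hLu : Lγ u pstar = G u + J u := by
      rw [hLγ, hw]
      simp
    have hval : G u + J u ≤ G ustar + J ustar := by rw [← hLu]; exact hle
    exact ⟨hu, hfeasu, fun v hv hfv => le_trans hval (hopt_star v hv hfv)⟩
  · rintro ⟨hu, hfu, hopt⟩
    refine ⟨hu, fun v hv => ?_⟩
    have hval : G u + J u ≤ G ustar + J ustar := hopt ustar hustar hfeas_star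
    have h1 : Lγ u pstar ≤ G ustar + J ustar := by
      rw [hLγ]
      have hF := F2 u hfu
      have hd : (‖proj (pstar + γ • Θ u)‖ ^ 2 - ‖pstar‖ ^ 2) / (2 * γ) ≤ 0 :=
        div_nonpos_of_nonpos_of_nonneg (by linarith) h2γ.le
      linarith
    have h2 : G ustar + J ustar ≤ Lγ v pstar := by
      have hg := hLγ_ge v hv
      have hN := sq_nonneg ‖pstar - proj (pstar + γ • Θ v)‖
      have := div_nonneg hN h2γ.le
      linarith
    linarith
end

section
/- (One-step averaged primal descent inequality, Lemma 4.1(i).) Let (u*, p*) be a saddle point of L on U × C*. Let u^k ∈ U, p^k ∈ C* with ‖p^k‖ ≤ μ, set q^k = Π(p^k + γΘ(u^k)), let ε^k > 0, and for each block i ∈ {1,…,N} let u^{k+1,i} be the SPDC block update from (u^k, p^k) with block i and step ε^k. Then (ε^k/N)[L(u^k, q^k) − L(u*, q^k)] ≤ [D(u*, u^k) + ε^k(L(u^k, p*) − L(u*, p*))] − (1/N)∑_{i=1}^N [D(u*, u^{k+1,i}) + ε^k(L(u^{k+1,i}, p*) − L(u*, p*))] + (ε^k/N)∑_{i=1}^N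 ⟨q^k − p*, Θ(u^k) − Θ(u^{k+1,i})⟩ − ((β − ε^k B_G)/2)·(1/N)∑_{i=1}^N ‖u^k − u^{k+1,i}‖². -/
open RealInnerProductSpace Filter Set


section Aux
variable {E : Type*} [NormedAddCommGroup E] [InnerProductSpace ℝ E] [CompleteSpace E]

lemma hasDerivAt_line {f : E → ℝ} {f' : E} {x : E} (hf : HasGradientAt f f' x)
    (z d : E) (t₀ : ℝ) (hx : z + t₀ • d = x) :
    HasDerivAt (fun t : ℝ => f (z + t • d)) ⟪f', d⟫ t₀ := by
  have hline : HasDerivAt (fun t : ℝ => z + t • d) d t₀ := by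
    simpa using ((hasDerivAt_id t₀).smul_const d).const_add z
  have hF : HasFDerivAt f (InnerProductSpace.toDual ℝ E f' : E →L[ℝ] ℝ) (z + t₀ • d) := by
    rw [hx]; exact hf.hasFDerivAt
  simpa [InnerProductSpace.toDual_apply_apply, Function.comp_def] using hF.comp_hasDerivAt t₀ hline

lemma tendsto_slope_line {f : E → ℝ} {f' : E} {z : E} (hf : HasGradientAt f f' z) (d : E) :
    Tendsto (fun t : ℝ => (f (z + t • d) - f z) / t) (nhdsWithin 0 (Set.Ioi 0)) (nhds ⟪f', d⟫) := by
  have h := hasDerivAt_line hf z d 0 (by simp)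
  rw [hasDerivAt_iff_tendsto_slope] at h
  have h2 : Tendsto (slope (fun t : ℝ => f (z + t • d)) 0) (nhdsWithin 0 (Set.Ioi 0)) (nhds ⟪f', d⟫) :=
    h.mono_left (nhdsWithin_mono 0 (fun x hx => ne_of_gt hx))
  refine h2.congr fun t => ?_
  simp [slope_def_field]

lemma le_dirDeriv {f : E → ℝ} {f' : E} {z : E} (hf : HasGradientAt f f' z) (d : E) {Q : ℝ}
    (h : ∀ t, t ∈ Set.Ioc (0:ℝ) 1 → Q * t ≤ f (z + t • d) - f z) : Q ≤ ⟪f', d⟫ := by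
  refine ge_of_tendsto (tendsto_slope_line hf d) ?_
  filter_upwards [Ioc_mem_nhdsGT_of_mem (by constructor <;> norm_num : (0:ℝ) ∈ Set.Ico 0 1)] with t ht
  exact (le_div_iff₀ ht.1).mpr (h t ht)

lemma dirDeriv_le {f : E → ℝ} {f' : E} {z : E} (hf : HasGradientAt f f' z) (d : E) {Q : ℝ}
    (h : ∀ t, t ∈ Set.Ioc (0:ℝ) 1 → f (z + t • d) - f z ≤ Q * t) : ⟪f', d⟫ ≤ Q := by
  refine le_of_tendsto (tendsto_slope_line hf d) ?_
  filter_upwards [Ioc_mem_nhdsGT_of_mem (by constructor <;> norm_num : (0:ℝ) ∈ Set.Ico 0 1)] with t ht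
  exact (div_le_iff₀ ht.1).mpr (h t ht)

lemma grad_block_eq {f : E → ℝ} {f'a f'b : E} {a b c : E}
    (hfa : HasGradientAt f f'a a) (hfb : HasGradientAt f f'b b)
    (heq : ∀ t : ℝ, f (a + t • c) - f a = f (b + t • c) - f b) :
    ⟪f'a, c⟫ = ⟪f'b, c⟫ := by
  have h1 := hasDerivAt_line hfa a c 0 (by simp)
  have h2 := hasDerivAt_line hfb b c 0 (by simp)
  have h2' : HasDerivAt (fun t : ℝ => f (a + t • c)) ⟪f'b, c⟫ 0 := by
    have hfun : (fun t : ℝ => f (a + t • c)) = fun t : ℝ => f (b + t • c) + (f a - f b) := by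
      funext t; have := heq t; linarith
    rw [hfun]; exact h2.add_const _
  exact h1.unique h2'

lemma convex_grad_ineq {f : E → ℝ} {f' : E} {x : E} (hconv : ConvexOn ℝ Set.univ f)
    (hf : HasGradientAt f f' x) (y : E) : ⟪f', y - x⟫ ≤ f y - f x := by
  refine dirDeriv_le hf (y - x) fun t ht => ?_
  have hc := hconv.2 (Set.mem_univ y) (Set.mem_univ x) ht.1.le (sub_nonneg.mpr ht.2) (by ring)
  have hpt : x + t • (y - x) = t • y + (1 - t) • x := by module
  simp only [smul_eq_mul] at hc
  rw [hpt]; nlinarith [hc]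

lemma descent_lemma {f : E → ℝ} (f' : E → E) (hf : ∀ x, HasGradientAt f (f' x) x)
    {B : ℝ} (hB : ∀ x y, ‖f' x - f' y‖ ≤ B * ‖x - y‖) (x y : E) :
    f y ≤ f x + ⟪f' x, y - x⟫ + B / 2 * ‖y - x‖ ^ 2 := by
  by_cases hxy : y = x
  · subst hxy; simp
  · have hBnn : 0 ≤ B := by
      have h1 := hB x y
      have h2 : 0 < ‖x - y‖ := by
        rw [norm_pos_iff, sub_ne_zero]; exact fun h => hxy h.symm
      nlinarith [norm_nonneg (f' x - f' y)]
    set d := y - x with hd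
    have hg : ∀ t : ℝ, HasDerivAt (fun s : ℝ => f (x + s • d)) ⟪f' (x + t • d), d⟫ t :=
      fun t => hasDerivAt_line (hf (x + t • d)) x d t rfl
    set h : ℝ → ℝ := fun t => f (x + t • d) - t * ⟪f' x, d⟫ - B / 2 * ‖d‖ ^ 2 * t ^ 2 with hh_def
    have hh : ∀ t : ℝ, HasDerivAt h (⟪f' (x + t • d), d⟫ - ⟪f' x, d⟫ - B * ‖d‖ ^ 2 * t) t := by
      intro t
      have h1 : HasDerivAt (fun s : ℝ => s * ⟪f' x, d⟫) ⟪f' x, d⟫ t := by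
        simpa using (hasDerivAt_id t).mul_const ⟪f' x, d⟫
      have h2 : HasDerivAt (fun s : ℝ => B / 2 * ‖d‖ ^ 2 * s ^ 2) (B * ‖d‖ ^ 2 * t) t := by
        have := (hasDerivAt_pow 2 t).const_mul (B / 2 * ‖d‖ ^ 2)
        rw [show B * ‖d‖ ^ 2 * t = B / 2 * ‖d‖ ^ 2 * ((2:ℕ) * t ^ (2 - 1)) by push_cast; ring]
        exact this
      exact ((hg t).sub h1).sub h2
    have hanti : AntitoneOn h (Set.Icc 0 1) := by
      apply antitoneOn_of_deriv_nonpos (convex_Icc 0 1)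
      · exact fun t _ => ((hh t).continuousAt).continuousWithinAt
      · exact fun t _ => ((hh t).differentiableAt).differentiableWithinAt
      · intro t ht
        rw [interior_Icc] at ht
        rw [(hh t).deriv]
        have hb := hB (x + t • d) x
        have hn : ‖x + t • d - x‖ = t * ‖d‖ := by
          rw [add_sub_cancel_left, norm_smul, Real.norm_eq_abs, abs_of_pos ht.1]
        have hip : ⟪f' (x + t • d) - f' x, d⟫ ≤ B * t * ‖d‖ * ‖d‖ := by
          calc ⟪f' (x + t • d) - f' x, d⟫ ≤ ‖f' (x + t • d) - f' x‖ * ‖d‖ := real_inner_le_norm _ _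
            _ ≤ B * t * ‖d‖ * ‖d‖ := by
                have := hB (x + t • d) x; rw [hn] at this
                nlinarith [norm_nonneg d]
        rw [inner_sub_left] at hip
        nlinarith [hip]
    have h10 : h 1 ≤ h 0 := hanti (by norm_num) (by norm_num) (by norm_num)
    have e0 : h 0 = f x := by simp [hh_def]
    have e1 : h 1 = f y - ⟪f' x, d⟫ - B / 2 * ‖d‖ ^ 2 := by
      simp only [hh_def, one_pow, one_mul, mul_one, one_smul]
      rw [show x + d = y by rw [hd]; abel]
    rw [e0, e1] at h10; linarith

end Aux


/-- The ambient product space `ℝ^n = ℝ^{n_1} × … × ℝ^{n_N}` with the Euclidean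
(ℓ²) product structure. -/
abbrev BlockSpace {N : ℕ} (nd : Fin N → ℕ) :=
  PiLp 2 (fun i : Fin N => EuclideanSpace ℝ (Fin (nd i)))

set_option maxHeartbeats 2000000 in
/-- Lemma 4.1(i): one-step averaged primal descent inequality for SPDC. -/
theorem spdc_one_step_primal_descent {m N : ℕ} (nd : Fin N → ℕ)
    (Ui : ∀ i : Fin N, Set (EuclideanSpace ℝ (Fin (nd i))))
    (hUi_ne : ∀ i, (Ui i).Nonempty) (hUi_closed : ∀ i, IsClosed (Ui i))
    (hUi_convex : ∀ i, Convex ℝ (Ui i))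
    (U : Set (BlockSpace nd)) (hU_def : U = {u : BlockSpace nd | ∀ i, u i ∈ Ui i})
    (C : Set (EuclideanSpace ℝ (Fin m)))
    (hC_ne : C.Nonempty) (hC_closed : IsClosed C) (hC_convex : Convex ℝ C)
    (hC_cone : ∀ a b : ℝ, 0 ≤ a → 0 ≤ b → ∀ x ∈ C, ∀ y ∈ C, a • x + b • y ∈ C)
    (Cstar : Set (EuclideanSpace ℝ (Fin m)))
    (hCstar : Cstar = {p : EuclideanSpace ℝ (Fin m) | ∀ x ∈ C, 0 ≤ ⟪p, x⟫})
    (proj : EuclideanSpace ℝ (Fin m) → EuclideanSpace ℝ (Fin m))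
    (hproj_mem : ∀ x, proj x ∈ Cstar)
    (hproj_char : ∀ x, ∀ q ∈ Cstar, ⟪q - proj x, x - proj x⟫ ≤ 0)
    (G : BlockSpace nd → ℝ) (G' : BlockSpace nd → BlockSpace nd)
    (hG_grad : ∀ x, HasGradientAt G (G' x) x)
    (hG_convex : ConvexOn ℝ Set.univ G)
    (BG : ℝ) (hBG : ∀ x y, ‖G' x - G' y‖ ≤ BG * ‖x - y‖)
    (Ji : ∀ i : Fin N, EuclideanSpace ℝ (Fin (nd i)) → ℝ)
    (J : BlockSpace nd → ℝ) (hJ_add : ∀ u, J u = ∑ i, Ji i (u i))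
    (hJ_convex : ConvexOn ℝ Set.univ J) (hJ_lsc : LowerSemicontinuous J)
    (Θi : ∀ i : Fin N, EuclideanSpace ℝ (Fin (nd i)) → EuclideanSpace ℝ (Fin m))
    (Θ : BlockSpace nd → EuclideanSpace ℝ (Fin m))
    (hΘ_add : ∀ u, Θ u = ∑ i, Θi i (u i))
    (hΘ_Cconvex : ∀ u v : BlockSpace nd, ∀ α : ℝ, α ∈ Set.Icc (0:ℝ) 1 →
      -(Θ (α • u + (1 - α) • v) - α • Θ u - (1 - α) • Θ v) ∈ C)
    (τ : ℝ) (O : Set (BlockSpace nd)) (hO : IsOpen O) (hUO : U ⊆ O)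
    (hΘ_lip : ∀ u ∈ O, ∀ v ∈ O, ‖Θ u - Θ v‖ ≤ τ * ‖u - v‖)
    (γ : ℝ) (hγ : 0 < γ)
    (K : BlockSpace nd → ℝ) (K' : BlockSpace nd → BlockSpace nd)
    (hK_grad : ∀ x, HasGradientAt K (K' x) x)
    (Ki : ∀ i : Fin N, EuclideanSpace ℝ (Fin (nd i)) → ℝ)
    (hK_add : ∀ u, K u = ∑ i, Ki i (u i))
    (β : ℝ) (hβ : 0 < β)
    (hK_strong : ∀ x y : BlockSpace nd,
      K x + ⟪K' x, y - x⟫ + β / 2 * ‖y - x‖ ^ 2 ≤ K y)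
    (D : BlockSpace nd → BlockSpace nd → ℝ)
    (hD : ∀ u v, D u v = K u - K v - ⟪K' v, u - v⟫)
    (L : BlockSpace nd → EuclideanSpace ℝ (Fin m) → ℝ)
    (hL : ∀ u p, L u p = G u + J u + ⟪p, Θ u⟫)
    (ustar : BlockSpace nd) (pstar : EuclideanSpace ℝ (Fin m))
    (hustar : ustar ∈ U) (hpstar : pstar ∈ Cstar)
    (hsaddle : (∀ p ∈ Cstar, L ustar p ≤ L ustar pstar) ∧
      (∀ u ∈ U, L ustar pstar ≤ L u pstar))
    (μ : ℝ) (hμpstar : ‖pstar‖ ≤ μ)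
    (uk : BlockSpace nd) (huk : uk ∈ U)
    (pk : EuclideanSpace ℝ (Fin m)) (hpk : pk ∈ Cstar) (hpkμ : ‖pk‖ ≤ μ)
    (qk : EuclideanSpace ℝ (Fin m)) (hqk : qk = proj (pk + γ • Θ uk))
    (εk : ℝ) (hεk : 0 < εk)
    (u1 : Fin N → BlockSpace nd) (hu1_mem : ∀ i, u1 i ∈ U)
    (hu1_fix : ∀ i j, j ≠ i → u1 i j = uk j)
    (hu1_min : ∀ i, ∀ u ∈ U,
      ⟪G' uk i, u1 i i⟫ + Ji i (u1 i i) + ⟪qk, Θi i (u1 i i)⟫ + D (u1 i) uk / εk ≤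
        ⟪G' uk i, u i⟫ + Ji i (u i) + ⟪qk, Θi i (u i)⟫ + D u uk / εk) :
    εk / N * (L uk qk - L ustar qk) ≤
      (D ustar uk + εk * (L uk pstar - L ustar pstar))
        - 1 / N * ∑ i, (D ustar (u1 i) + εk * (L (u1 i) pstar - L ustar pstar))
        + εk / N * ∑ i, ⟪qk - pstar, Θ uk - Θ (u1 i)⟫
        - (β - εk * BG) / 2 * (1 / N * ∑ i, ‖uk - u1 i‖ ^ 2) := by
  classical
  rcases Nat.eq_zero_or_pos N with hN0 | hNpos
  · subst hN0
    have h1 : 0 ≤ D ustar uk := by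
      have hs := hK_strong uk ustar
      have hnn : 0 ≤ β / 2 * ‖ustar - uk‖ ^ 2 := by positivity
      rw [hD]; linarith
    have h2 : 0 ≤ L uk pstar - L ustar pstar := sub_nonneg.mpr (hsaddle.2 uk huk)
    have h3 := mul_nonneg hεk.le h2
    simp only [Nat.cast_zero, div_zero, zero_mul, Finset.univ_eq_empty, Finset.sum_empty,
      mul_zero, sub_zero, add_zero]
    linarith
  have hNR : (0:ℝ) < (N:ℝ) := by exact_mod_cast hNpos
  have hUconv : Convex ℝ U := by
    rw [hU_def]; intro a ha b hb s t hs ht hst j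
    exact hUi_convex j (ha j) (hb j) hs ht hst
  have hJdiff : ∀ (i : Fin N) (a : BlockSpace nd), (∀ j, j ≠ i → a j = uk j) →
      J a - J uk = Ji i (a i) - Ji i (uk i) := by
    intro i a ha
    rw [hJ_add, hJ_add, ← Finset.sum_sub_distrib]
    rw [Finset.sum_eq_single i (fun j _ hj => by rw [ha j hj, sub_self]) (by simp)]
  have hΘdiff : ∀ (i : Fin N) (a : BlockSpace nd), (∀ j, j ≠ i → a j = uk j) →
      Θ a - Θ uk = Θi i (a i) - Θi i (uk i) := by
    intro i a ha
    rw [hΘ_add, hΘ_add, ← Finset.sum_sub_distrib]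
    rw [Finset.sum_eq_single i (fun j _ hj => by rw [ha j hj, sub_self]) (by simp)]
  have hblockinner : ∀ (a c : BlockSpace nd) (i : Fin N), (∀ j, j ≠ i → c j = 0) →
      ⟪a, c⟫ = ⟪a i, c i⟫ := by
    intro a c i hc
    rw [PiLp.inner_apply]
    exact Finset.sum_eq_single i (fun j _ hj => by rw [hc j hj, inner_zero_right]) (by simp)
  have hqkC : ∀ x ∈ C, 0 ≤ ⟪qk, x⟫ := by
    have h := hproj_mem (pk + γ • Θ uk); rw [hCstar] at h; rw [hqk]; exact h
  have hΘq : ∀ (a b : BlockSpace nd) (t : ℝ), 0 ≤ t → t ≤ 1 →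
      ⟪qk, Θ (t • a + (1 - t) • b)⟫ ≤ t * ⟪qk, Θ a⟫ + (1 - t) * ⟪qk, Θ b⟫ := by
    intro a b t ht0 ht1
    have hmem := hΘ_Cconvex a b t ⟨ht0, ht1⟩
    have h0 := hqkC _ hmem
    rw [inner_neg_right, inner_sub_right, inner_sub_right, real_inner_smul_right,
      real_inner_smul_right] at h0
    linarith
  -- per-block inequality
  have Fi : ∀ i : Fin N,
      εk * (⟪G' uk, u1 i - uk⟫ + ⟪G' uk i, uk i - ustar i⟫ + (J (u1 i) - J uk) +
          (Ji i (uk i) - Ji i (ustar i)) + (⟪qk, Θ (u1 i)⟫ - ⟪qk, Θ uk⟫) +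
          (⟪qk, Θi i (uk i)⟫ - ⟪qk, Θi i (ustar i)⟫)) +
        (D (u1 i) uk + D ustar (u1 i)) ≤ D ustar uk := by
    intro i
    set w : BlockSpace nd := WithLp.toLp 2 (Function.update uk.ofLp i (ustar i)) with hw
    have hwi : w i = ustar i := Function.update_self i (ustar i) uk.ofLp
    have hwj : ∀ j, j ≠ i → w j = uk j := fun j hj => Function.update_of_ne hj _ _
    have hwU : w ∈ U := by
      rw [hU_def]; intro j
      by_cases hj : j = i
      · subst hj; rw [hwi]
        have h := hustar; rw [hU_def] at h; exact h j
      · rw [hwj j hj]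
        have h := huk; rw [hU_def] at h; exact h j
    set d : BlockSpace nd := w - u1 i with hd
    have hdj : ∀ j, j ≠ i → d j = 0 := fun j hj => by
      show w j - u1 i j = 0
      rw [hwj j hj, hu1_fix i j hj, sub_self]
    have hdi : d i = ustar i - u1 i i := by show w i - u1 i i = _; rw [hwi]
    have hcomb : ∀ t : ℝ, u1 i + t • d = t • w + (1 - t) • u1 i := by
      intro t; rw [hd]; module
    have hutU : ∀ t : ℝ, 0 ≤ t → t ≤ 1 → u1 i + t • d ∈ U := by
      intro t h0 h1
      rw [hcomb t]
      exact hUconv hwU (hu1_mem i) h0 (by linarith) (by ring)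
    have hutfix : ∀ (t : ℝ) (j : Fin N), j ≠ i → (u1 i + t • d) j = uk j := by
      intro t j hj
      show u1 i j + t • d j = uk j
      rw [hu1_fix i j hj, hdj j hj, smul_zero, add_zero]
    have hQ : ⟪K' uk, d⟫ - εk * (⟪G' uk, d⟫ + (J w - J (u1 i)) +
        (⟪qk, Θ w⟫ - ⟪qk, Θ (u1 i)⟫)) ≤ ⟪K' (u1 i), d⟫ := by
      apply le_dirDeriv (hK_grad (u1 i)) d
      intro t ht
      have hmin := hu1_min i (u1 i + t • d) (hutU t ht.1.le ht.2)
      have hc1 : ⟪G' uk i, (u1 i + t • d) i⟫ - ⟪G' uk i, u1 i i⟫ = t * ⟪G' uk, d⟫ := by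
        have happ : (u1 i + t • d) i = u1 i i + t • d i := rfl
        rw [happ, inner_add_right, real_inner_smul_right, hblockinner (G' uk) d i hdj]
        ring
      have hc2 : Ji i ((u1 i + t • d) i) - Ji i (u1 i i) ≤ t * (J w - J (u1 i)) := by
        have e1 : J (u1 i + t • d) - J uk = Ji i ((u1 i + t • d) i) - Ji i (uk i) :=
          hJdiff i _ (hutfix t)
        have e2 : J (u1 i) - J uk = Ji i (u1 i i) - Ji i (uk i) :=
          hJdiff i _ (fun j hj => hu1_fix i j hj)
        have hcv := hJ_convex.2 (Set.mem_univ w) (Set.mem_univ (u1 i))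
          (show (0:ℝ) ≤ t from ht.1.le) (show (0:ℝ) ≤ 1 - t by linarith [ht.2])
          (show t + (1 - t) = 1 by ring)
        rw [← hcomb t] at hcv
        simp only [smul_eq_mul] at hcv
        linarith
      have hc3 : ⟪qk, Θi i ((u1 i + t • d) i)⟫ - ⟪qk, Θi i (u1 i i)⟫ ≤
          t * (⟪qk, Θ w⟫ - ⟪qk, Θ (u1 i)⟫) := by
        have e1 : Θ (u1 i + t • d) - Θ uk = Θi i ((u1 i + t • d) i) - Θi i (uk i) :=
          hΘdiff i _ (hutfix t)
        have e2 : Θ (u1 i) - Θ uk = Θi i (u1 i i) - Θi i (uk i) :=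
          hΘdiff i _ (fun j hj => hu1_fix i j hj)
        have f1 : ⟪qk, Θ (u1 i + t • d)⟫ - ⟪qk, Θ uk⟫ =
            ⟪qk, Θi i ((u1 i + t • d) i)⟫ - ⟪qk, Θi i (uk i)⟫ := by
          rw [← inner_sub_right, ← inner_sub_right, e1]
        have f2 : ⟪qk, Θ (u1 i)⟫ - ⟪qk, Θ uk⟫ = ⟪qk, Θi i (u1 i i)⟫ - ⟪qk, Θi i (uk i)⟫ := by
          rw [← inner_sub_right, ← inner_sub_right, e2]
        have hcv := hΘq w (u1 i) t ht.1.le ht.2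
        rw [← hcomb t] at hcv
        linarith
      have hc4 : D (u1 i + t • d) uk - D (u1 i) uk =
          K (u1 i + t • d) - K (u1 i) - t * ⟪K' uk, d⟫ := by
        rw [hD, hD]
        have e : u1 i + t • d - uk = (u1 i - uk) + t • d := by abel
        rw [e, inner_add_right, real_inner_smul_right]
        ring
      have hmin' : εk * (⟪G' uk i, u1 i i⟫ + Ji i (u1 i i) + ⟪qk, Θi i (u1 i i)⟫) + D (u1 i) uk ≤
          εk * (⟪G' uk i, (u1 i + t • d) i⟫ + Ji i ((u1 i + t • d) i) +
            ⟪qk, Θi i ((u1 i + t • d) i)⟫) + D (u1 i + t • d) uk := by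
        have h1 := mul_le_mul_of_nonneg_left hmin hεk.le
        have h2 : εk * (D (u1 i) uk / εk) = D (u1 i) uk := by field_simp
        have h3 : εk * (D (u1 i + t • d) uk / εk) = D (u1 i + t • d) uk := by field_simp
        linarith [h1, h2, h3]
      have sc1 : εk * (⟪G' uk i, (u1 i + t • d) i⟫ - ⟪G' uk i, u1 i i⟫) =
          εk * (t * ⟪G' uk, d⟫) := by rw [hc1]
      have sc2 := mul_le_mul_of_nonneg_left hc2 hεk.le
      have sc3 := mul_le_mul_of_nonneg_left hc3 hεk.le
      linarith [hmin', sc1, sc2, sc3, hc4]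
    have hKblock : ⟪K' (u1 i), w - ustar⟫ = ⟪K' uk, w - ustar⟫ := by
      apply grad_block_eq (hK_grad (u1 i)) (hK_grad uk)
      intro t
      rw [hK_add, hK_add, hK_add, hK_add, ← Finset.sum_sub_distrib, ← Finset.sum_sub_distrib]
      apply Finset.sum_congr rfl
      intro j _
      by_cases hj : j = i
      · have hc0 : (w - ustar) j = 0 := by
          show w j - ustar j = 0
          rw [hj, hwi, sub_self]
        show Ki j (u1 i j + t • (w - ustar) j) - Ki j (u1 i j) =
          Ki j (uk j + t • (w - ustar) j) - Ki j (uk j)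
        rw [hc0, smul_zero, add_zero, add_zero]
        simp
      · show Ki j (u1 i j + t • (w - ustar) j) - Ki j (u1 i j) =
          Ki j (uk j + t • (w - ustar) j) - Ki j (uk j)
        rw [hu1_fix i j hj]
    have he4 : D w uk - D w (u1 i) = D ustar uk - D ustar (u1 i) := by
      simp only [hD]
      simp only [inner_sub_right] at hKblock ⊢
      linarith [hKblock]
    have he5 : ⟪K' (u1 i), d⟫ - ⟪K' uk, d⟫ = D w uk - D (u1 i) uk - D w (u1 i) := by
      simp only [hD, hd]
      simp only [inner_sub_right]
      ring
    have hJw : J w - J uk = Ji i (ustar i) - Ji i (uk i) := by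
      have h := hJdiff i w hwj; rwa [hwi] at h
    have hTw : ⟪qk, Θ w⟫ - ⟪qk, Θ uk⟫ = ⟪qk, Θi i (ustar i)⟫ - ⟪qk, Θi i (uk i)⟫ := by
      rw [← inner_sub_right, hΘdiff i w hwj, hwi, inner_sub_right]
    have scJw : εk * (J w) = εk * (J uk + Ji i (ustar i) - Ji i (uk i)) := by
      rw [show J w = J uk + Ji i (ustar i) - Ji i (uk i) by linarith [hJw]]
    have scTw : εk * ⟪qk, Θ w⟫ = εk * (⟪qk, Θ uk⟫ + ⟪qk, Θi i (ustar i)⟫ - ⟪qk, Θi i (uk i)⟫) := by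
      rw [show ⟪qk, Θ w⟫ = ⟪qk, Θ uk⟫ + ⟪qk, Θi i (ustar i)⟫ - ⟪qk, Θi i (uk i)⟫ by linarith [hTw]]
    have scgd : εk * ⟪G' uk, d⟫ = εk * (⟪G' uk i, ustar i⟫ - ⟪G' uk i, u1 i i⟫) := by
      rw [hblockinner (G' uk) d i hdj, hdi, inner_sub_right]
    have scg1 : εk * ⟪G' uk, u1 i - uk⟫ = εk * (⟪G' uk i, u1 i i⟫ - ⟪G' uk i, uk i⟫) := by
      rw [hblockinner (G' uk) (u1 i - uk) i
          (fun j hj => by show u1 i j - uk j = 0; rw [hu1_fix i j hj, sub_self]),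
        show (u1 i - uk) i = u1 i i - uk i from rfl, inner_sub_right]
    have scg2 : εk * ⟪G' uk i, uk i - ustar i⟫ =
        εk * (⟪G' uk i, uk i⟫ - ⟪G' uk i, ustar i⟫) := by rw [inner_sub_right]
    linarith [hQ, he4, he5, scJw, scTw, scgd, scg1, scg2]
  -- summation
  have Hsum := Finset.sum_le_sum (fun i (_ : i ∈ Finset.univ) => Fi i)
  have hsum_const : ∑ _i : Fin N, D ustar uk = N * D ustar uk := by
    rw [Finset.sum_const, Finset.card_univ, Fintype.card_fin, nsmul_eq_mul]
  have hs1 : ∑ i, ⟪G' uk i, uk i - ustar i⟫ = ⟪G' uk, uk - ustar⟫ := by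
    rw [PiLp.inner_apply]
    exact Finset.sum_congr rfl (fun j _ => rfl)
  have hs2a : ∑ i, Ji i (uk i) = J uk := (hJ_add uk).symm
  have hs2b : ∑ i, Ji i (ustar i) = J ustar := (hJ_add ustar).symm
  have hs3a : ∑ i, ⟪qk, Θi i (uk i)⟫ = ⟪qk, Θ uk⟫ := by rw [hΘ_add uk, inner_sum]
  have hs3b : ∑ i, ⟪qk, Θi i (ustar i)⟫ = ⟪qk, Θ ustar⟫ := by rw [hΘ_add ustar, inner_sum]
  have hL1 : ∑ i, (εk * (⟪G' uk, u1 i - uk⟫ + ⟪G' uk i, uk i - ustar i⟫ + (J (u1 i) - J uk) +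
          (Ji i (uk i) - Ji i (ustar i)) + (⟪qk, Θ (u1 i)⟫ - ⟪qk, Θ uk⟫) +
          (⟪qk, Θi i (uk i)⟫ - ⟪qk, Θi i (ustar i)⟫)) +
        (D (u1 i) uk + D ustar (u1 i)))
      = εk * ((∑ i, ⟪G' uk, u1 i - uk⟫) + ⟪G' uk, uk - ustar⟫ +
          ((∑ i, J (u1 i)) - N * J uk) + (J uk - J ustar) +
          ((∑ i, ⟪qk, Θ (u1 i)⟫) - N * ⟪qk, Θ uk⟫) + (⟪qk, Θ uk⟫ - ⟪qk, Θ ustar⟫))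
        + ((∑ i, D (u1 i) uk) + (∑ i, D ustar (u1 i))) := by
    simp only [Finset.sum_add_distrib, Finset.sum_sub_distrib, ← Finset.mul_sum,
      Finset.sum_const, Finset.card_univ, Fintype.card_fin, nsmul_eq_mul]
    rw [hs1, hs2a, hs2b, hs3a, hs3b]
  rw [hL1, hsum_const] at Hsum
  -- descent, gradient inequality, strong convexity
  have hdesc_sum : (∑ i, G (u1 i)) - N * G uk - BG / 2 * ∑ i, ‖uk - u1 i‖ ^ 2 ≤
      ∑ i, ⟪G' uk, u1 i - uk⟫ := by
    have hpt : ∀ i : Fin N,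
        G (u1 i) - G uk - BG / 2 * ‖uk - u1 i‖ ^ 2 ≤ ⟪G' uk, u1 i - uk⟫ := by
      intro i
      have hdl := descent_lemma G' hG_grad hBG uk (u1 i)
      rw [show ‖u1 i - uk‖ = ‖uk - u1 i‖ from norm_sub_rev _ _] at hdl
      linarith [hdl]
    have h := Finset.sum_le_sum (fun (i : Fin N) (_ : i ∈ Finset.univ) => hpt i)
    simp only [Finset.sum_sub_distrib, Finset.sum_const, Finset.card_univ, Fintype.card_fin,
      nsmul_eq_mul, ← Finset.mul_sum] at h
    linarith [h]
  have hgradG : G uk - G ustar ≤ ⟪G' uk, uk - ustar⟫ := by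
    have h := convex_grad_ineq hG_convex (hG_grad uk) ustar
    have e : ⟪G' uk, uk - ustar⟫ = -⟪G' uk, ustar - uk⟫ := by
      rw [← inner_neg_right]
      congr 1
      abel
    rw [e]
    linarith
  have hstr_sum : β / 2 * ∑ i, ‖uk - u1 i‖ ^ 2 ≤ ∑ i, D (u1 i) uk := by
    have hpt : ∀ i : Fin N, β / 2 * ‖uk - u1 i‖ ^ 2 ≤ D (u1 i) uk := by
      intro i
      have hs := hK_strong uk (u1 i)
      rw [hD, show ‖uk - u1 i‖ = ‖u1 i - uk‖ from norm_sub_rev _ _]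
      linarith [hs]
    have h := Finset.sum_le_sum (fun (i : Fin N) (_ : i ∈ Finset.univ) => hpt i)
    rw [← Finset.mul_sum] at h
    exact h
  have hdescε := mul_le_mul_of_nonneg_left hdesc_sum hεk.le
  have hgradε := mul_le_mul_of_nonneg_left hgradG hεk.le
  -- key inequality (multiplied by N)
  have key : εk * (L uk qk - L ustar qk) ≤
      N * (D ustar uk + εk * (L uk pstar - L ustar pstar))
        - ∑ i, (D ustar (u1 i) + εk * (L (u1 i) pstar - L ustar pstar))
        + εk * ∑ i, ⟪qk - pstar, Θ uk - Θ (u1 i)⟫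
        - (β - εk * BG) / 2 * ∑ i, ‖uk - u1 i‖ ^ 2 := by
    have E1 : ∑ i, (D ustar (u1 i) + εk * (L (u1 i) pstar - L ustar pstar))
        = (∑ i, D ustar (u1 i)) + εk * ((∑ i, G (u1 i)) + (∑ i, J (u1 i)) +
            (∑ i, ⟪pstar, Θ (u1 i)⟫))
          - N * (εk * (G ustar + J ustar + ⟪pstar, Θ ustar⟫)) := by
      simp only [hL, Finset.sum_add_distrib, Finset.sum_sub_distrib, Finset.sum_const,
        Finset.card_univ, Fintype.card_fin, nsmul_eq_mul, ← Finset.mul_sum]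
      ring
    have E2 : ∑ i, ⟪qk - pstar, Θ uk - Θ (u1 i)⟫
        = N * ⟪qk, Θ uk⟫ - N * ⟪pstar, Θ uk⟫ - (∑ i, ⟪qk, Θ (u1 i)⟫) +
          (∑ i, ⟪pstar, Θ (u1 i)⟫) := by
      simp only [inner_sub_left, inner_sub_right, Finset.sum_sub_distrib, Finset.sum_const,
        Finset.card_univ, Fintype.card_fin, nsmul_eq_mul]
      ring
    rw [E1, E2]
    simp only [hL]
    linarith [Hsum, hdescε, hgradε, hstr_sum]
  -- divide by N
  rw [← sub_nonneg]
  have h0 : 0 ≤ (N * (D ustar uk + εk * (L uk pstar - L ustar pstar))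
        - ∑ i, (D ustar (u1 i) + εk * (L (u1 i) pstar - L ustar pstar))
        + εk * ∑ i, ⟪qk - pstar, Θ uk - Θ (u1 i)⟫
        - (β - εk * BG) / 2 * ∑ i, ‖uk - u1 i‖ ^ 2) - εk * (L uk qk - L ustar qk) := by
    linarith [key]
  have heq : (D ustar uk + εk * (L uk pstar - L ustar pstar))
        - 1 / N * ∑ i, (D ustar (u1 i) + εk * (L (u1 i) pstar - L ustar pstar))
        + εk / N * ∑ i, ⟪qk - pstar, Θ uk - Θ (u1 i)⟫
        - (β - εk * BG) / 2 * (1 / N * ∑ i, ‖uk - u1 i‖ ^ 2)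
      - εk / N * (L uk qk - L ustar qk)
    = 1 / (N:ℝ) * ((N * (D ustar uk + εk * (L uk pstar - L ustar pstar))
        - ∑ i, (D ustar (u1 i) + εk * (L (u1 i) pstar - L ustar pstar))
        + εk * ∑ i, ⟪qk - pstar, Θ uk - Θ (u1 i)⟫
        - (β - εk * BG) / 2 * ∑ i, ‖uk - u1 i‖ ^ 2) - εk * (L uk qk - L ustar qk)) := by
    field_simp
  rw [heq]
  exact mul_nonneg (by positivity) h0
end

section
/- (One-step dual inequality, Lemma 4.1(ii).) Let u^k ∈ U, p^k ∈ C* with ‖p^k‖ ≤ μ, set q^k = Π(p^k + γΘ(u^k)). Let u⁺ ∈ U be arbitrary and p⁺ = 𝒫_μ(Π(p^k + γΘ(u⁺))), and let 0 < ε⁺ ≤ ε^k. Then for every p ∈ C* with ‖p‖ ≤ μ: (ε^k/N)[L(u^k, p) − L(u^k, q^k)] ≤ (1/(2γN))[ε^k‖p − p^k‖² − ε⁺‖p − p⁺‖²] − (ε^k/N)⟨q^k − p, Θ(u^k) − Θ(u⁺)⟩ + (γτ²ε^k/(2N))‖u^k − u⁺‖² − (ε^k/(2γN))‖q^k − p^k‖².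 -/
set_option maxHeartbeats 1000000

open RealInnerProductSpace

/-- Lemma 4.1(ii) (one-step dual inequality). -/
theorem spdc_one_step_dual_inequality {n m : ℕ}
    (U : Set (EuclideanSpace ℝ (Fin n)))
    (hU_ne : U.Nonempty) (hU_closed : IsClosed U) (hU_convex : Convex ℝ U)
    (C : Set (EuclideanSpace ℝ (Fin m)))
    (hC_ne : C.Nonempty) (hC_closed : IsClosed C) (hC_convex : Convex ℝ C)
    (hC_cone : ∀ a b : ℝ, 0 ≤ a → 0 ≤ b → ∀ x ∈ C, ∀ y ∈ C, a • x + b • y ∈ C)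
    (Cstar : Set (EuclideanSpace ℝ (Fin m)))
    (hCstar : Cstar = {p : EuclideanSpace ℝ (Fin m) | ∀ x ∈ C, 0 ≤ ⟪p, x⟫})
    (proj : EuclideanSpace ℝ (Fin m) → EuclideanSpace ℝ (Fin m))
    (hproj_mem : ∀ x, proj x ∈ Cstar)
    (hproj_char : ∀ x, ∀ q ∈ Cstar, ⟪q - proj x, x - proj x⟫ ≤ 0)
    (G : EuclideanSpace ℝ (Fin n) → ℝ)
    (G' : EuclideanSpace ℝ (Fin n) → EuclideanSpace ℝ (Fin n))
    (hG_grad : ∀ x, HasGradientAt G (G' x) x)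
    (hG_convex : ConvexOn ℝ Set.univ G)
    (J : EuclideanSpace ℝ (Fin n) → ℝ)
    (hJ_convex : ConvexOn ℝ Set.univ J) (hJ_lsc : LowerSemicontinuous J)
    (Θ : EuclideanSpace ℝ (Fin n) → EuclideanSpace ℝ (Fin m))
    (hΘ_Cconvex : ∀ u v : EuclideanSpace ℝ (Fin n), ∀ α : ℝ, α ∈ Set.Icc (0:ℝ) 1 →
      -(Θ (α • u + (1 - α) • v) - α • Θ u - (1 - α) • Θ v) ∈ C)
    (τ : ℝ) (O : Set (EuclideanSpace ℝ (Fin n))) (hO : IsOpen O) (hUO : U ⊆ O)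
    (hΘ_lip : ∀ u ∈ O, ∀ v ∈ O, ‖Θ u - Θ v‖ ≤ τ * ‖u - v‖)
    (L : EuclideanSpace ℝ (Fin n) → EuclideanSpace ℝ (Fin m) → ℝ)
    (hL : ∀ u p, L u p = G u + J u + ⟪p, Θ u⟫)
    (γ : ℝ) (hγ : 0 < γ) (N : ℕ) (hN : 1 ≤ N) (μ : ℝ) (hμ : 0 < μ)
    (uk : EuclideanSpace ℝ (Fin n)) (huk : uk ∈ U)
    (pk : EuclideanSpace ℝ (Fin m)) (hpk : pk ∈ Cstar) (hpkμ : ‖pk‖ ≤ μ)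
    (qk : EuclideanSpace ℝ (Fin m)) (hqk : qk = proj (pk + γ • Θ uk))
    (uplus : EuclideanSpace ℝ (Fin n)) (huplus : uplus ∈ U)
    (pplus : EuclideanSpace ℝ (Fin m))
    (hpplus : pplus = min 1 (μ / ‖proj (pk + γ • Θ uplus)‖) • proj (pk + γ • Θ uplus))
    (εk εplus : ℝ) (hεplus : 0 < εplus) (hεle : εplus ≤ εk) :
    ∀ p ∈ Cstar, ‖p‖ ≤ μ →
      εk / N * (L uk p - L uk qk) ≤
        1 / (2 * γ * N) * (εk * ‖p - pk‖ ^ 2 - εplus * ‖p - pplus‖ ^ 2)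
          - εk / N * ⟪qk - p, Θ uk - Θ uplus⟫
          + γ * τ ^ 2 * εk / (2 * N) * ‖uk - uplus‖ ^ 2
          - εk / (2 * γ * N) * ‖qk - pk‖ ^ 2 := by
  intro p hp hpμ
  have hεk : (0:ℝ) < εk := lt_of_lt_of_le hεplus hεle
  have hNpos : (0:ℝ) < (N:ℝ) := by exact_mod_cast Nat.lt_of_lt_of_le Nat.zero_lt_one hN
  set r := proj (pk + γ • Θ uplus) with hr
  have key : ∀ x y z : EuclideanSpace ℝ (Fin m),
      2 * ⟪x - y, y - z⟫ = ‖x - z‖ ^ 2 - ‖x - y‖ ^ 2 - ‖y - z‖ ^ 2 := by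
    intro x y z
    have h := norm_add_sq_real (x - y) (y - z)
    rw [sub_add_sub_cancel] at h
    linarith
  have hrC : r ∈ Cstar := hproj_mem _
  -- A2
  have h2 : ⟪r - qk, (pk + γ • Θ uk) - qk⟫ ≤ 0 := by
    rw [hqk]; exact hproj_char _ _ hrC
  have e2 : ⟪r - qk, (pk + γ • Θ uk) - qk⟫
      = γ * ⟪r - qk, Θ uk⟫ - ⟪r - qk, qk - pk⟫ := by
    rw [show (pk + γ • Θ uk) - qk = γ • Θ uk - (qk - pk) from by abel,
      inner_sub_right, real_inner_smul_right]
  have A2 : 2 * (γ * ⟪r - qk, Θ uk⟫) ≤ ‖r - pk‖ ^ 2 - ‖r - qk‖ ^ 2 - ‖qk - pk‖ ^ 2 := by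
    have hk := key r qk pk
    rw [e2] at h2; linarith
  -- A3
  have h3 : ⟪p - r, (pk + γ • Θ uplus) - r⟫ ≤ 0 := hproj_char _ _ hp
  have e3 : ⟪p - r, (pk + γ • Θ uplus) - r⟫
      = γ * ⟪p - r, Θ uplus⟫ - ⟪p - r, r - pk⟫ := by
    rw [show (pk + γ • Θ uplus) - r = γ • Θ uplus - (r - pk) from by abel,
      inner_sub_right, real_inner_smul_right]
  have A3 : 2 * (γ * ⟪p - r, Θ uplus⟫) ≤ ‖p - pk‖ ^ 2 - ‖p - r‖ ^ 2 - ‖r - pk‖ ^ 2 := by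
    have hk := key p r pk
    rw [e3] at h3; linarith
  -- Lipschitz and AM-GM
  have hlip : ‖Θ uplus - Θ uk‖ ≤ τ * ‖uk - uplus‖ := by
    rw [norm_sub_rev uk uplus]
    exact hΘ_lip uplus (hUO huplus) uk (hUO huk)
  have A5 : 2 * (γ * ⟪r - qk, Θ uplus - Θ uk⟫)
      ≤ ‖r - qk‖ ^ 2 + γ ^ 2 * τ ^ 2 * ‖uk - uplus‖ ^ 2 := by
    have hcs := real_inner_le_norm (r - qk) (Θ uplus - Θ uk)
    nlinarith [norm_nonneg (r - qk), norm_nonneg (Θ uplus - Θ uk),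
      sq_nonneg (‖r - qk‖ - γ * (τ * ‖uk - uplus‖)),
      mul_le_mul_of_nonneg_left hlip (norm_nonneg (r - qk)), hγ,
      mul_le_mul_of_nonneg_left hcs hγ.le,
      mul_le_mul_of_nonneg_left (mul_le_mul_of_nonneg_left hlip (norm_nonneg (r - qk))) hγ.le]
  -- ball projection step
  have h4 : ⟪p - pplus, r - pplus⟫ ≤ 0 := by
    rcases le_or_gt ‖r‖ μ with hle | hgt
    · have hpr : pplus = r := by
        rcases eq_or_ne r 0 with h0 | h0
        · rw [hpplus, h0]; simp
        · rw [hpplus, min_eq_left ((one_le_div (norm_pos_iff.mpr h0)).mpr hle), one_smul]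
      rw [hpr]; simp
    · have hrpos : (0:ℝ) < ‖r‖ := hμ.trans hgt
      have hmin : min (1:ℝ) (μ / ‖r‖) = μ / ‖r‖ :=
        min_eq_right (le_of_lt ((div_lt_one hrpos).mpr hgt))
      have hsm : r - (μ / ‖r‖) • r = (1 - μ / ‖r‖) • r := by
        rw [sub_smul, one_smul]
      rw [hpplus, hmin, hsm, real_inner_smul_right, inner_sub_left, real_inner_smul_left,
        real_inner_self_eq_norm_sq]
      have h1 : (0:ℝ) ≤ 1 - μ / ‖r‖ := by
        rw [sub_nonneg]; exact le_of_lt ((div_lt_one hrpos).mpr hgt)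
      have h2' : ⟪p, r⟫ ≤ μ * ‖r‖ :=
        le_trans (real_inner_le_norm p r) (mul_le_mul_of_nonneg_right hpμ (norm_nonneg r))
      have h3' : μ / ‖r‖ * ‖r‖ ^ 2 = μ * ‖r‖ := by
        field_simp
      nlinarith [h1, h2', h3']
  have hE : ‖p - pplus‖ ^ 2 ≤ ‖p - r‖ ^ 2 := by
    have hk := key p pplus r
    have h5 : ⟪p - pplus, pplus - r⟫ = -⟪p - pplus, r - pplus⟫ := by
      rw [show pplus - r = -(r - pplus) from by abel, inner_neg_right]
    nlinarith [sq_nonneg ‖pplus - r‖, h4, hk, h5]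
  have A6 : ⟪p - qk, Θ uplus⟫
      = ⟪p - r, Θ uplus⟫ + ⟪r - qk, Θ uk⟫ + ⟪r - qk, Θ uplus - Θ uk⟫ := by
    simp only [inner_sub_left, inner_sub_right]; ring
  have hsum : 2 * (γ * ⟪p - qk, Θ uplus⟫)
      ≤ ‖p - pk‖ ^ 2 - ‖p - r‖ ^ 2 - ‖qk - pk‖ ^ 2 + γ ^ 2 * τ ^ 2 * ‖uk - uplus‖ ^ 2 := by
    rw [A6]; nlinarith [A2, A3, A5]
  have hscaled := mul_le_mul_of_nonneg_left hsum hεk.le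
  have hPp1 : εplus * ‖p - pplus‖ ^ 2 ≤ εk * ‖p - pplus‖ ^ 2 :=
    mul_le_mul_of_nonneg_right hεle (sq_nonneg _)
  have hPp2 : εk * ‖p - pplus‖ ^ 2 ≤ εk * ‖p - r‖ ^ 2 :=
    mul_le_mul_of_nonneg_left hE hεk.le
  have hdiv : 0 ≤ (εk * ‖p - pk‖ ^ 2 + γ ^ 2 * τ ^ 2 * εk * ‖uk - uplus‖ ^ 2
      - (2 * γ * εk * ⟪p - qk, Θ uplus⟫ + εplus * ‖p - pplus‖ ^ 2
        + εk * ‖qk - pk‖ ^ 2)) / (2 * γ * (N:ℝ)) :=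
    div_nonneg (by nlinarith [hscaled, hPp1, hPp2]) (by positivity)
  simp only [hL]
  rw [show ⟪qk - p, Θ uk - Θ uplus⟫ = ⟪p - qk, Θ uplus⟫ - ⟪p - qk, Θ uk⟫ from by
    simp only [inner_sub_left, inner_sub_right]; ring]
  have heq : 1 / (2 * γ * (N:ℝ)) * (εk * ‖p - pk‖ ^ 2 - εplus * ‖p - pplus‖ ^ 2)
      - εk / (N:ℝ) * (⟪p - qk, Θ uplus⟫ - ⟪p - qk, Θ uk⟫)
      + γ * τ ^ 2 * εk / (2 * (N:ℝ)) * ‖uk - uplus‖ ^ 2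
      - εk / (2 * γ * (N:ℝ)) * ‖qk - pk‖ ^ 2
      - εk / (N:ℝ) * (G uk + J uk + ⟪p, Θ uk⟫ - (G uk + J uk + ⟪qk, Θ uk⟫))
      = (εk * ‖p - pk‖ ^ 2 + γ ^ 2 * τ ^ 2 * εk * ‖uk - uplus‖ ^ 2
      - (2 * γ * εk * ⟪p - qk, Θ uplus⟫ + εplus * ‖p - pplus‖ ^ 2
        + εk * ‖qk - pk‖ ^ 2)) / (2 * γ * (N:ℝ)) := by
    simp only [inner_sub_left]
    field_simp
    ring
  linarith [hdiv, heq]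
end
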